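/- arXiv:1507.00599 — 9 statements merged into one kernel-verified Lean document; each statement's English description precedes it below -/
import Mathlib

section
/- For every p ∈ ℕ₀, every integer s ≥ 1, every x ≥ 0 and every u ∈ ℝ, one has | ℙ( ⋂_{i=0}^{s−1} f^{-i}( U_{p,0}(u,x)ᶜ ) ) − ℙ( ⋂_{i=0}^{s−1} f^{-i}( R_{p,0}(u,x)ᶜ ) ) | ≤ p · ℙ( U_{p,0}(u,x) ). -/
open MeasureTheory Set Filter

noncomputable section

namespace Paper

variable {X : Type*}

/-- First hitting time (≥ 1) to `A`, valued in `ℕ∞` (`⊤` if the orbit never hits `A`). -/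
def hitTime (f : X → X) (A : Set X) (x : X) : ℕ∞ :=
  sInf ((fun j : ℕ => (j : ℕ∞)) '' {j : ℕ | 1 ≤ j ∧ f^[j] x ∈ A})

/-- The induced (first-hitting) map `F_A`. -/
def inducedMap (f : X → X) (A : Set X) (x : X) : X :=
  f^[(hitTime f A x).toNat] x

/-- Waiting times: `wait f A 1 = hitTime f A` and, for `i ≥ 1`,
`wait f A (i+1) x = hitTime f A ((inducedMap f A)^[i] x)`. -/
def wait (f : X → X) (A : Set X) (i : ℕ) (x : X) : ℕ∞ :=
  hitTime f A ((inducedMap f A)^[i - 1] x)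

/-- `j`-th hitting time `r_A^j = w_A^1 + ⋯ + w_A^j`, with `r_A^0 = 0`. -/
def hitIter (f : X → X) (A : Set X) (j : ℕ) (x : X) : ℕ∞ :=
  ∑ i ∈ Finset.range j, wait f A (i + 1) x

/-- `U(u) = {X₀ > u}`. -/
def Uset (φ : X → ℝ) (u : ℝ) : Set X := {x | u < φ x}

/-- `U_p^{(κ)}(u)`. -/
def Upk (f : X → X) (φ : X → ℝ) (p : ℕ) (u : ℝ) (κ : ℕ) : Set X :=
  Uset φ u ∩ ⋂ i ∈ Finset.Icc 1 κ, {x | wait f (Uset φ u) i x ≤ (p : ℕ∞)}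

/-- `U_p^{(∞)}(u)`. -/
def UpInf (f : X → X) (φ : X → ℝ) (p : ℕ) (u : ℝ) : Set X :=
  ⋂ κ, Upk f φ p u κ

/-- `Q_{p,0}^{κ}(u)`. -/
def Qk (f : X → X) (φ : X → ℝ) (p : ℕ) (u : ℝ) (κ : ℕ) : Set X :=
  Upk f φ p u κ ∩ {x | (p : ℕ∞) < wait f (Uset φ u) (κ + 1) x}

/-- Accumulated excess `Σ_{j=0}^{r_{U(u)}^{κ}} (X_j − u)_+` (the AOT mark over a cluster). -/
def excessSum (f : X → X) (φ : X → ℝ) (u : ℝ) (κ : ℕ) (x : X) : ℝ :=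
  ∑ j ∈ Finset.range ((hitIter f (Uset φ u) κ x).toNat + 1), max (φ (f^[j] x) - u) 0

/-- `U_{p,0}^{κ}(u,x)` for the AOT mark. -/
def Uk (f : X → X) (φ : X → ℝ) (p : ℕ) (u : ℝ) (κ : ℕ) (t : ℝ) : Set X :=
  Qk f φ p u κ ∩ {x | t < excessSum f φ u κ x}

/-- `U_{p,0}(u,x)`. -/
def U0 (f : X → X) (φ : X → ℝ) (p : ℕ) (u : ℝ) (t : ℝ) : Set X :=
  (⋃ κ, Uk f φ p u κ t) ∪ UpInf f φ p u

/-- `R_{p,0}(u,x)`. -/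
def R0 (f : X → X) (φ : X → ℝ) (p : ℕ) (u : ℝ) (t : ℝ) : Set X :=
  U0 f φ p u t ∩ {x | (p : ℕ∞) < hitTime f (U0 f φ p u t) x}

/-- `δ_{p,s,u}(x)` (with `δ_{0,s,u} := 0`). -/
def delta [MeasurableSpace X] (μ : Measure X) (f : X → X) (φ : X → ℝ) (p s : ℕ) (u t : ℝ) : ℝ :=
  if p = 0 then 0
  else (p : ℝ) * ∑ κ ∈ Finset.range (s / p + 1), ((κ : ℝ) + 1) * (μ (Uk f φ p u κ t)).toReal
      + ((s : ℝ) + (p : ℝ)) * (∑' κ : ℕ, μ (Uk f φ p u (κ + s / p + 1) t)).toReal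

theorem exists_iterate_mem_of_hitTime_le {f : X → X} {A : Set X} {x : X} {n : ℕ}
    (h : hitTime f A x ≤ n) : ∃ j, 1 ≤ j ∧ j ≤ n ∧ f^[j] x ∈ A := by
  by_contra! hfar
  have : ((n + 1 : ℕ) : ℕ∞) ≤ hitTime f A x := by
    refine le_sInf ?_
    rintro _ ⟨j, ⟨hj, hjA⟩, rfl⟩
    exact ENat.natCast_le_natCast.2 (Nat.lt_of_not_le fun hjn => hfar j hj hjn hjA)
  exact absurd (this.trans h) (by exact_mod_cast Nat.not_succ_le_self n)

/-- The last visit to `V` before time `s` is followed by another one within `p` steps, which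
must come at time `≥ s`. -/
theorem iInter_preimage_compl_subset (f : X → X) (V : Set X) (p s : ℕ) :
    ⋂ i ∈ Finset.range s, f^[i] ⁻¹' (V ∩ {x | (p : ℕ∞) < hitTime f V x})ᶜ ⊆
      (⋂ i ∈ Finset.range s, f^[i] ⁻¹' Vᶜ) ∪ ⋃ i ∈ Finset.Ico (s - p) s, f^[i] ⁻¹' V := by
  classical
  intro x hx
  refine or_iff_not_imp_left.2 fun hvisit => ?_
  set visits := (Finset.range s).filter (fun i => f^[i] x ∈ V)
  have hne : visits.Nonempty := by
    simp only [Set.mem_iInter₂, Set.mem_preimage, Set.mem_compl_iff, not_forall,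
      not_not] at hvisit
    obtain ⟨i, hi, hiV⟩ := hvisit
    exact ⟨i, Finset.mem_filter.2 ⟨hi, hiV⟩⟩
  obtain ⟨his, hiV⟩ := Finset.mem_filter.1 (visits.max'_mem hne)
  set i := visits.max' hne
  have hreturn : hitTime f V (f^[i] x) ≤ p := by
    by_contra hgt
    exact Set.mem_iInter₂.1 hx i his ⟨hiV, not_le.1 hgt⟩
  obtain ⟨j, hj, hjp, hjV⟩ := exists_iterate_mem_of_hitTime_le hreturn
  have hlate : s ≤ j + i := by
    by_contra! hlt
    have hmem : j + i ∈ visits := by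
      refine Finset.mem_filter.2 ⟨Finset.mem_range.2 hlt, ?_⟩
      rwa [Function.iterate_add_apply]
    have := visits.le_max' _ hmem
    omega
  have hi_lt : i < s := Finset.mem_range.1 his
  exact Set.mem_iUnion₂.2 ⟨i, Finset.mem_Ico.2 ⟨by omega, hi_lt⟩, hiV⟩

theorem measure_iInter_preimage_compl_le [MeasurableSpace X] {μ : Measure X} {f : X → X}
    (hf : MeasurePreserving f μ μ) (V : Set X) (p s : ℕ) :
    μ (⋂ i ∈ Finset.range s, f^[i] ⁻¹' (V ∩ {x | (p : ℕ∞) < hitTime f V x})ᶜ) ≤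
      μ (⋂ i ∈ Finset.range s, f^[i] ⁻¹' Vᶜ) + p * μ V := by
  have hlast : μ (⋃ i ∈ Finset.Ico (s - p) s, f^[i] ⁻¹' V) ≤ p * μ V :=
    calc μ (⋃ i ∈ Finset.Ico (s - p) s, f^[i] ⁻¹' V)
        ≤ ∑ i ∈ Finset.Ico (s - p) s, μ (f^[i] ⁻¹' V) := measure_biUnion_finset_le _ _
      _ ≤ ∑ _i ∈ Finset.Ico (s - p) s, μ V :=
          Finset.sum_le_sum fun i _ => (hf.iterate i).measure_preimage_le V
      _ ≤ p * μ V := by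
          rw [Finset.sum_const, Nat.card_Ico, nsmul_eq_mul]
          gcongr
          exact_mod_cast (by omega : s - (s - p) ≤ p)
  calc _ ≤ μ ((⋂ i ∈ Finset.range s, f^[i] ⁻¹' Vᶜ) ∪ ⋃ i ∈ Finset.Ico (s - p) s, f^[i] ⁻¹' V) :=
        measure_mono (iInter_preimage_compl_subset f V p s)
    _ ≤ _ := (measure_union_le _ _).trans (add_le_add_right hlast _)

theorem statement0_general {X : Type*} [MeasurableSpace X] (μ : Measure X) [IsProbabilityMeasure μ]
    (f : X → X) (φ : X → ℝ) (hf : MeasurePreserving f μ μ)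
    (p s : ℕ) (t : ℝ) (u : ℝ) :
    |(μ (⋂ i ∈ Finset.range s, f^[i] ⁻¹' (U0 f φ p u t)ᶜ)).toReal -
        (μ (⋂ i ∈ Finset.range s, f^[i] ⁻¹' (R0 f φ p u t)ᶜ)).toReal| ≤
      (p : ℝ) * (μ (U0 f φ p u t)).toReal := by
  set V := U0 f φ p u t
  set avoidV := ⋂ i ∈ Finset.range s, f^[i] ⁻¹' Vᶜ
  set avoidR := ⋂ i ∈ Finset.range s, f^[i] ⁻¹' (R0 f φ p u t)ᶜ
  have hle : μ avoidV ≤ μ avoidR :=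
    measure_mono <| Set.iInter₂_mono fun i _ =>
      Set.preimage_mono <| Set.compl_subset_compl.2 Set.inter_subset_left
  have hge : μ avoidR ≤ μ avoidV + p * μ V := measure_iInter_preimage_compl_le hf V p s
  have hge_real := ENNReal.toReal_mono (by finiteness) hge
  rw [ENNReal.toReal_add (by finiteness) (by finiteness), ENNReal.toReal_mul,
    ENNReal.toReal_natCast] at hge_real
  rw [abs_sub_comm, abs_of_nonneg (sub_nonneg.2 (ENNReal.toReal_mono (by finiteness) hle))]
  linarith

/-- Lemma comparing avoidance of `U_{p,0}(u,x)` with avoidance of `R_{p,0}(u,x)`. -/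
theorem statement0 {X : Type*} [MeasurableSpace X] (μ : Measure X) [IsProbabilityMeasure μ]
    (f : X → X) (φ : X → ℝ) (hf : MeasurePreserving f μ μ) (hφ : Measurable φ)
    (p s : ℕ) (hs : 1 ≤ s) (t : ℝ) (ht : 0 ≤ t) (u : ℝ) :
    |(μ (⋂ i ∈ Finset.range s, f^[i] ⁻¹' (U0 f φ p u t)ᶜ)).toReal -
        (μ (⋂ i ∈ Finset.range s, f^[i] ⁻¹' (R0 f φ p u t)ᶜ)).toReal| ≤
      (p : ℝ) * (μ (U0 f φ p u t)).toReal :=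
  statement0_general μ f φ hf p s t u

end Paper
end
end

section
/- For every p ∈ ℕ₀, every integer s ≥ 1, every x ≥ 0 and every u ∈ ℝ, one has | ℙ( ⋂_{i=0}^{s−1} f^{-i}( R_{p,0}(u,x)ᶜ ) ) − ( 1 − s·ℙ( R_{p,0}(u,x) ) ) | ≤ s · Σ_{j=p+1}^{s−1} ℙ( Q_{p,0}^0(u) ∩ f^{-j}( U_{p,0}(u,x) ) ). -/
open MeasureTheory Set Filter

noncomputable section

namespace Paper

variable {X : Type*}

/-!
A point `x ∈ R0` is not in `U_p^{(∞)}` (its first return, within `p` steps, would again be in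
`U0`), so it lies in some `U_{p,0}^κ`, and its cluster of exceedances ends at a time `d` with
`f^d x ∈ Q_{p,0}^0`. The orbit cannot visit `U0` at a time `1 ≤ k ≤ d + p`. For `k > d` the
visit would come within `p` steps of `f^d x`. For `k ≤ d`, the time `k` is an exceedance time
of the cluster, and `f^k x ∈ U0` means that the AOT mark from `k` to `d` exceeds the
threshold; then so does the larger mark from the first return `w ≤ p`, i.e. `f^w x ∈ U0`,
contradicting `x ∈ R0`. Hence if the orbit enters `R0` at times `j < i`, then
`f^(i-c) x ∈ Q_{p,0}^0 ∩ f^(-c) U0` for some `c ∈ (p, i - j]`. The first-entrance decomposition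
of `⋂_{i<s} f^(-i) R0ᶜ` and invariance of `ℙ` then bound the error term by
`s ∑_{c=p+1}^{s-1} ℙ(Q_{p,0}^0 ∩ f^(-c) U0)`.
-/

section HittingTimes

variable {f : X → X} {A : Set X} {x : X}

theorem hitTime_le_iff {n : ℕ} :
    hitTime f A x ≤ n ↔ ∃ j, 1 ≤ j ∧ j ≤ n ∧ f^[j] x ∈ A := by
  refine ⟨fun h => ?_, fun ⟨j, hj1, hjn, hjA⟩ => ?_⟩
  · by_contra! hc
    have hlt : ((n + 1 : ℕ) : ℕ∞) ≤ hitTime f A x := by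
      refine le_sInf ?_
      rintro _ ⟨j, ⟨hj1, hjA⟩, rfl⟩
      have : n + 1 ≤ j := by_contra fun hjn => hc j hj1 (by omega) hjA
      exact Nat.cast_le.2 this
    have := hlt.trans h
    norm_cast at this
    omega
  · have hmem : (j : ℕ∞) ∈ (fun j : ℕ => (j : ℕ∞)) '' {j | 1 ≤ j ∧ f^[j] x ∈ A} :=
      ⟨j, ⟨hj1, hjA⟩, rfl⟩
    exact (sInf_le hmem).trans (Nat.cast_le.2 hjn)

theorem lt_hitTime_iff {n : ℕ} :
    n < hitTime f A x ↔ ∀ j, 1 ≤ j → j ≤ n → f^[j] x ∉ A := by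
  rw [← not_le, hitTime_le_iff]
  push Not
  rfl

theorem hitTime_eq_coe_iff {n : ℕ} :
    hitTime f A x = n ↔ 1 ≤ n ∧ f^[n] x ∈ A ∧ ∀ j, 1 ≤ j → j < n → f^[j] x ∉ A := by
  constructor
  · intro h
    obtain ⟨j, hj1, hjn, hjA⟩ := hitTime_le_iff.1 h.le
    have hmin : ∀ i, 1 ≤ i → i < n → f^[i] x ∉ A := fun i hi1 hin hiA => by
      have := hitTime_le_iff.2 ⟨i, hi1, le_rfl, hiA⟩
      rw [h] at this
      norm_cast at this
      omega
    obtain rfl : j = n := by_contra fun hne => hmin j hj1 (by omega) hjA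
    exact ⟨hj1, hjA, hmin⟩
  · rintro ⟨hn1, hnA, hmin⟩
    refine le_antisymm (hitTime_le_iff.2 ⟨n, hn1, le_rfl, hnA⟩) ?_
    cases n with
    | zero => simp
    | succ n =>
      exact Order.add_one_le_of_lt (lt_hitTime_iff.2 fun j hj1 hjn => hmin j hj1 (by omega))

theorem exists_hitTime_eq_of_le {n : ℕ} (h : hitTime f A x ≤ n) :
    ∃ w : ℕ, hitTime f A x = w ∧ w ≤ n := by
  obtain ⟨w, hw⟩ := ENat.ne_top_iff_exists.1 (ne_top_of_le_ne_top (ENat.natCast_ne_top n) h)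
  exact ⟨w, hw.symm, by rwa [← hw, Nat.cast_le] at h⟩

theorem inducedMap_eq_of_hitTime_eq {n : ℕ} (h : hitTime f A x = n) :
    inducedMap f A x = f^[n] x := by
  simp [inducedMap, h]

theorem inducedMap_mem (h : hitTime f A x ≠ ⊤) : inducedMap f A x ∈ A := by
  obtain ⟨n, hn⟩ := ENat.ne_top_iff_exists.1 h
  rw [inducedMap_eq_of_hitTime_eq hn.symm]
  exact (hitTime_eq_coe_iff.1 hn.symm).2.1

theorem wait_one : wait f A 1 x = hitTime f A x := rfl

theorem wait_succ (i : ℕ) : wait f A (i + 1) x = hitTime f A ((inducedMap f A)^[i] x) := rfl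

theorem wait_iterate_inducedMap {i : ℕ} (hi : 1 ≤ i) (m : ℕ) :
    wait f A i ((inducedMap f A)^[m] x) = wait f A (m + i) x := by
  obtain ⟨i, rfl⟩ := Nat.exists_eq_add_of_le' hi
  rw [wait_succ, ← add_assoc, wait_succ, ← Function.iterate_add_apply, add_comm]

theorem hitIter_succ (κ : ℕ) : hitIter f A (κ + 1) x = hitIter f A κ x + wait f A (κ + 1) x :=
  Finset.sum_range_succ _ _

theorem hitIter_one : hitIter f A 1 x = hitTime f A x := by
  simp [hitIter, wait_one]

theorem hitIter_add (m κ : ℕ) :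
    hitIter f A (m + κ) x = hitIter f A m x + hitIter f A κ ((inducedMap f A)^[m] x) := by
  simp only [hitIter, Finset.sum_range_add]
  congr 1
  refine Finset.sum_congr rfl fun i _ => ?_
  rw [wait_iterate_inducedMap (Nat.le_add_left 1 i), add_assoc]

theorem exists_of_hitIter_succ_eq {κ n : ℕ} (h : hitIter f A (κ + 1) x = n) :
    ∃ a b : ℕ, hitIter f A κ x = a ∧ hitTime f A ((inducedMap f A)^[κ] x) = b ∧ a + b = n := by
  rw [hitIter_succ, wait_succ] at h
  obtain ⟨ha, hb⟩ := WithTop.add_ne_top.1 (h ▸ ENat.natCast_ne_top n)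
  obtain ⟨a, ha⟩ := ENat.ne_top_iff_exists.1 ha
  obtain ⟨b, hb⟩ := ENat.ne_top_iff_exists.1 hb
  rw [← ha, ← hb] at h
  exact ⟨a, b, ha.symm, hb.symm, by exact_mod_cast h⟩

theorem iterate_inducedMap_eq_of_hitIter_eq {κ n : ℕ} (h : hitIter f A κ x = n) :
    (inducedMap f A)^[κ] x = f^[n] x := by
  induction κ generalizing n with
  | zero =>
    obtain rfl : n = 0 := by simpa [hitIter, eq_comm] using h
    rfl
  | succ κ ih =>
    obtain ⟨a, b, ha, hb, rfl⟩ := exists_of_hitIter_succ_eq h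
    rw [Function.iterate_succ_apply', inducedMap_eq_of_hitTime_eq hb, ih ha,
      ← Function.iterate_add_apply, add_comm]

theorem iterate_hitIter_mem {κ n : ℕ} (h : hitIter f A (κ + 1) x = n) : f^[n] x ∈ A := by
  obtain ⟨a, b, -, hb, -⟩ := exists_of_hitIter_succ_eq h
  rw [← iterate_inducedMap_eq_of_hitIter_eq h, Function.iterate_succ_apply']
  exact inducedMap_mem (hb ▸ ENat.natCast_ne_top b)

theorem exists_hitIter_eq_of_iterate_mem {κ n j : ℕ} (h : hitIter f A κ x = n) (hj : 1 ≤ j)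
    (hjn : j ≤ n) (hjA : f^[j] x ∈ A) : ∃ m, 1 ≤ m ∧ m ≤ κ ∧ hitIter f A m x = j := by
  induction κ generalizing n with
  | zero =>
    obtain rfl : n = 0 := by simpa [hitIter, eq_comm] using h
    omega
  | succ κ ih =>
    obtain ⟨a, b, ha, hb, rfl⟩ := exists_of_hitIter_succ_eq h
    by_cases hja : j ≤ a
    · obtain ⟨m, hm1, hmκ, hm⟩ := ih ha hja
      exact ⟨m, hm1, by omega, hm⟩
    · have hvisit : f^[j - a] ((inducedMap f A)^[κ] x) ∈ A := by
        rwa [iterate_inducedMap_eq_of_hitIter_eq ha, ← Function.iterate_add_apply,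
          Nat.sub_add_cancel (by omega)]
      have := hitTime_le_iff.2 ⟨j - a, by omega, le_rfl, hvisit⟩
      rw [hb, Nat.cast_le] at this
      refine ⟨κ + 1, by omega, le_rfl, ?_⟩
      rw [hitIter_succ, wait_succ, ha, hb]
      exact_mod_cast (by omega : a + b = j)

end HittingTimes

section Clusters

variable {f : X → X} {φ : X → ℝ} {p : ℕ} {u t : ℝ} {x : X} {κ : ℕ}

theorem mem_Upk :
    x ∈ Upk f φ p u κ ↔ u < φ x ∧ ∀ i, 1 ≤ i → i ≤ κ → wait f (Uset φ u) i x ≤ p := by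
  simp [Upk, Uset, and_imp]

theorem mem_UpInf :
    x ∈ UpInf f φ p u ↔ u < φ x ∧ ∀ i, 1 ≤ i → wait f (Uset φ u) i x ≤ p := by
  simp only [UpInf, Set.mem_iInter, mem_Upk]
  exact ⟨fun h => ⟨(h 0).1, fun i hi => (h i).2 i hi le_rfl⟩,
    fun h κ => ⟨h.1, fun i hi _ => h.2 i hi⟩⟩

theorem U0_subset_Uset : U0 f φ p u t ⊆ Uset φ u := by
  rintro x (hx | hx)
  · obtain ⟨κ, hκ, -⟩ := Set.mem_iUnion.1 hx
    exact hκ.1.1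
  · exact (mem_UpInf.1 hx).1

theorem exists_hitIter_eq_of_mem_Upk (hx : x ∈ Upk f φ p u κ) {m : ℕ} (hm : m ≤ κ) :
    ∃ n : ℕ, hitIter f (Uset φ u) m x = n := by
  have hle : hitIter f (Uset φ u) m x ≤ ((m * p : ℕ) : ℕ∞) := by
    refine (Finset.sum_le_card_nsmul _ _ (p : ℕ∞) fun i hi => ?_).trans_eq (by simp)
    exact (mem_Upk.1 hx).2 (i + 1) (by omega) (by simp at hi; omega)
  obtain ⟨n, hn⟩ := ENat.ne_top_iff_exists.1 (ne_top_of_le_ne_top (ENat.natCast_ne_top _) hle)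
  exact ⟨n, hn.symm⟩

theorem iterate_inducedMap_mem_Qk (hx : x ∈ Qk f φ p u κ) {m : ℕ} (hm : m ≤ κ) :
    (inducedMap f (Uset φ u))^[m] x ∈ Qk f φ p u (κ - m) := by
  obtain ⟨⟨hxU, hwait⟩, hlast⟩ := hx
  refine ⟨⟨?_, ?_⟩, ?_⟩
  · cases m with
    | zero => exact hxU
    | succ m =>
      obtain ⟨n, hn⟩ := exists_hitIter_eq_of_mem_Upk ⟨hxU, hwait⟩ hm
      rw [iterate_inducedMap_eq_of_hitIter_eq hn]
      exact iterate_hitIter_mem hn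
  · simp only [Set.mem_iInter, Finset.mem_Icc] at hwait ⊢
    intro i hi
    rw [Set.mem_ofPred_eq, wait_iterate_inducedMap hi.1]
    exact hwait (m + i) ⟨by omega, by omega⟩
  · rw [Set.mem_ofPred_eq, wait_iterate_inducedMap (by omega),
      show m + (κ - m + 1) = κ + 1 by omega]
    exact hlast

theorem iterate_hitIter_mem_Qk_zero (hx : x ∈ Qk f φ p u κ) {d : ℕ}
    (hd : hitIter f (Uset φ u) κ x = d) : f^[d] x ∈ Qk f φ p u 0 := by
  simpa [iterate_inducedMap_eq_of_hitIter_eq hd] using iterate_inducedMap_mem_Qk hx le_rfl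

theorem le_of_mem_Qk_of_mem_Upk {κ' : ℕ} (h : x ∈ Qk f φ p u κ) (h' : x ∈ Upk f φ p u κ') :
    κ' ≤ κ :=
  not_lt.1 fun hlt => absurd ((mem_Upk.1 h').2 (κ + 1) (by omega) hlt) (not_le.2 h.2)

theorem eq_of_mem_Qk_of_mem_Qk {κ' : ℕ} (h : x ∈ Qk f φ p u κ) (h' : x ∈ Qk f φ p u κ') :
    κ = κ' :=
  le_antisymm (le_of_mem_Qk_of_mem_Upk h' h.1) (le_of_mem_Qk_of_mem_Upk h h'.1)

theorem notMem_UpInf_of_mem_Qk (h : x ∈ Qk f φ p u κ) : x ∉ UpInf f φ p u :=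
  fun hinf => (le_of_mem_Qk_of_mem_Upk h (Set.mem_iInter.1 hinf (κ + 1))).not_gt κ.lt_succ_self

theorem mem_U0_iff_of_mem_Qk (h : x ∈ Qk f φ p u κ) :
    x ∈ U0 f φ p u t ↔ t < excessSum f φ u κ x := by
  simp only [U0, Set.mem_union, Set.mem_iUnion, notMem_UpInf_of_mem_Qk h, or_false]
  refine ⟨fun ⟨κ', hκ', hexc⟩ => ?_, fun hexc => ⟨κ, h, hexc⟩⟩
  rwa [eq_of_mem_Qk_of_mem_Qk h hκ']

theorem inducedMap_mem_UpInf (h : x ∈ UpInf f φ p u) :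
    inducedMap f (Uset φ u) x ∈ UpInf f φ p u := by
  rw [mem_UpInf] at h ⊢
  refine ⟨inducedMap_mem (ne_top_of_le_ne_top (ENat.natCast_ne_top p) (h.2 1 le_rfl)),
    fun i hi => ?_⟩
  rw [← Function.iterate_one (inducedMap f _), wait_iterate_inducedMap hi]
  exact h.2 (1 + i) (by omega)

theorem excessSum_iterate {a n : ℕ} (h : hitIter f (Uset φ u) κ (f^[a] x) = n) :
    excessSum f φ u κ (f^[a] x) = ∑ j ∈ Finset.Ico a (a + n + 1), max (φ (f^[j] x) - u) 0 := by
  rw [excessSum, h, ENat.toNat_natCast, Finset.sum_Ico_eq_sum_range]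
  refine Finset.sum_congr (by congr 1; omega) fun j _ => ?_
  rw [← Function.iterate_add_apply, add_comm]

theorem iterate_mem_U0_iff_of_mem_Qk (hx : x ∈ Qk f φ p u κ) {m a d : ℕ} (hm : m ≤ κ)
    (ha : hitIter f (Uset φ u) m x = a) (hd : hitIter f (Uset φ u) κ x = d) :
    f^[a] x ∈ U0 f φ p u t ↔ t < ∑ j ∈ Finset.Ico a (d + 1), max (φ (f^[j] x) - u) 0 := by
  have hQ := iterate_inducedMap_mem_Qk hx hm
  rw [iterate_inducedMap_eq_of_hitIter_eq ha] at hQ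
  have hsplit := hitIter_add (f := f) (A := Uset φ u) (x := x) m (κ - m)
  rw [Nat.add_sub_cancel' hm, hd, ha, iterate_inducedMap_eq_of_hitIter_eq ha] at hsplit
  obtain ⟨r, hr⟩ := exists_hitIter_eq_of_mem_Upk hQ.1 le_rfl
  rw [hr] at hsplit
  rw [mem_U0_iff_of_mem_Qk hQ, excessSum_iterate hr, show a + r = d by exact_mod_cast hsplit.symm]

end Clusters

section ReturnsFromR0

variable {f : X → X} {φ : X → ℝ} {p : ℕ} {u t : ℝ} {x : X}

theorem notMem_UpInf_of_mem_R0 (hx : x ∈ R0 f φ p u t) : x ∉ UpInf f φ p u := by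
  intro hinf
  have hret : hitTime f (Uset φ u) x ≤ p := (mem_UpInf.1 hinf).2 1 le_rfl
  obtain ⟨w, hw, hwp⟩ := exists_hitTime_eq_of_le hret
  have hFx := inducedMap_mem_UpInf hinf
  rw [inducedMap_eq_of_hitTime_eq hw] at hFx
  exact lt_hitTime_iff.1 hx.2 w (hitTime_eq_coe_iff.1 hw).1 hwp (Or.inr hFx)

theorem add_lt_of_mem_R0 (hx : x ∈ R0 f φ p u t) {κ d k : ℕ} (hQ : x ∈ Qk f φ p u κ)
    (hd : hitIter f (Uset φ u) κ x = d) (hk : 1 ≤ k) (hfk : f^[k] x ∈ U0 f φ p u t) :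
    d + p < k := by
  have hfkU : f^[k] x ∈ Uset φ u := U0_subset_Uset hfk
  by_contra! hkd
  rcases lt_or_ge d k with hdk | hkd'
  · have hret : hitTime f (Uset φ u) (f^[d] x) ≤ p := by
      refine hitTime_le_iff.2 ⟨k - d, by omega, by omega, ?_⟩
      rwa [← Function.iterate_add_apply, Nat.sub_add_cancel hdk.le]
    exact not_le.2 (iterate_hitIter_mem_Qk_zero hQ hd).2 hret
  · obtain ⟨m, hm1, hmκ, hm⟩ := exists_hitIter_eq_of_iterate_mem hd hk hkd' hfkU
    have hret : hitTime f (Uset φ u) x ≤ p := (mem_Upk.1 hQ.1).2 1 le_rfl (by omega)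
    obtain ⟨w, hw, hwp⟩ := exists_hitTime_eq_of_le hret
    have hwk : w ≤ k := by
      have := hitTime_le_iff.2 ⟨k, hk, le_rfl, hfkU⟩
      rwa [hw, Nat.cast_le] at this
    -- the AOT mark accumulated from the first return `w ≤ k` dominates the one from `k`
    have hexc := (iterate_mem_U0_iff_of_mem_Qk hQ hmκ hm hd).1 hfk
    have hw_mem : f^[w] x ∈ U0 f φ p u t := by
      refine (iterate_mem_U0_iff_of_mem_Qk (m := 1) hQ (by omega)
        (hitIter_one.trans hw) hd).2 ?_
      exact hexc.trans_le (Finset.sum_le_sum_of_subset_of_nonneg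
        (Finset.Ico_subset_Ico_left hwk) fun _ _ _ => le_max_right _ _)
    exact lt_hitTime_iff.1 hx.2 w (hitTime_eq_coe_iff.1 hw).1 hwp hw_mem

theorem exists_mem_Qk_zero_of_mem_R0 (hx : x ∈ R0 f φ p u t) {k : ℕ} (hk : 1 ≤ k)
    (hfk : f^[k] x ∈ U0 f φ p u t) :
    ∃ c, p < c ∧ c ≤ k ∧ f^[k - c] x ∈ Qk f φ p u 0 ∩ f^[c] ⁻¹' U0 f φ p u t := by
  obtain ⟨κ, hQ, -⟩ : ∃ κ, x ∈ Uk f φ p u κ t := by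
    rcases hx.1 with h | h
    · exact Set.mem_iUnion.1 h
    · exact absurd h (notMem_UpInf_of_mem_R0 hx)
  obtain ⟨d, hd⟩ := exists_hitIter_eq_of_mem_Upk hQ.1 le_rfl
  have hdk := add_lt_of_mem_R0 hx hQ hd hk hfk
  refine ⟨k - d, by omega, by omega, ?_, ?_⟩
  · rw [Nat.sub_sub_self (by omega)]
    exact iterate_hitIter_mem_Qk_zero hQ hd
  · rwa [Set.mem_preimage, ← Function.iterate_add_apply, show k - d + (k - (k - d)) = k by omega]

end ReturnsFromR0

section Measurability

variable [MeasurableSpace X] {f : X → X} {A : Set X} {φ : X → ℝ} {p : ℕ} {u t : ℝ}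

instance : MeasurableAdd₂ ℕ∞ := ⟨measurable_of_countable _⟩

theorem measurable_apply_of_countable_index {ι β : Type*} [Countable ι] [MeasurableSpace ι]
    [MeasurableSingletonClass ι] [MeasurableSpace β] {g : ι → X → β} (hg : ∀ i, Measurable (g i))
    {N : X → ι} (hN : Measurable N) : Measurable fun x => g (N x) x :=
  (measurable_from_prod_countable_left (f := fun q : X × ι => g q.2 q.1) hg).comp
    (measurable_id.prodMk hN)

theorem measurable_hitTime (hf : Measurable f) (hA : MeasurableSet A) :
    Measurable (hitTime f A) := by
  refine ENat.measurable_iff.2 fun n => ?_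
  have hfiber : hitTime f A ⁻¹' {(n : ℕ∞)} =
      {x | 1 ≤ n ∧ f^[n] x ∈ A ∧ ∀ j, 1 ≤ j → j < n → f^[j] x ∉ A} := by
    ext x
    exact hitTime_eq_coe_iff
  rw [hfiber]
  simp only [Set.ofPred_and, Set.ofPred_forall]
  exact (MeasurableSet.const _).inter ((hf.iterate n hA).inter
    (.iInter fun j => .iInter fun _ => .iInter fun _ => (hf.iterate j hA).compl))

theorem measurable_inducedMap (hf : Measurable f) (hA : MeasurableSet A) :
    Measurable (inducedMap f A) :=
  measurable_apply_of_countable_index (fun n : ℕ∞ => hf.iterate n.toNat)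
    (measurable_hitTime hf hA)

theorem measurable_wait (hf : Measurable f) (hA : MeasurableSet A) (i : ℕ) :
    Measurable (wait f A i) :=
  (measurable_hitTime hf hA).comp ((measurable_inducedMap hf hA).iterate _)

theorem measurable_hitIter (hf : Measurable f) (hA : MeasurableSet A) (κ : ℕ) :
    Measurable (hitIter f A κ) :=
  Finset.measurable_sum _ fun i _ => measurable_wait hf hA (i + 1)

theorem measurableSet_Uset (hφ : Measurable φ) : MeasurableSet (Uset φ u) :=
  measurableSet_lt measurable_const hφ

theorem measurable_excessSum (hf : Measurable f) (hφ : Measurable φ) (κ : ℕ) :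
    Measurable (excessSum f φ u κ) :=
  measurable_apply_of_countable_index
    (g := fun (n : ℕ∞) x => ∑ j ∈ Finset.range (n.toNat + 1), max (φ (f^[j] x) - u) 0)
    (fun _ => Finset.measurable_sum _ fun j _ =>
      ((hφ.comp (hf.iterate j)).sub_const u).max measurable_const)
    (measurable_hitIter hf (measurableSet_Uset hφ) κ)

theorem measurableSet_Upk (hf : Measurable f) (hφ : Measurable φ) (κ : ℕ) :
    MeasurableSet (Upk f φ p u κ) :=
  (measurableSet_Uset hφ).inter (.biInter (Set.to_countable _) fun i _ =>
    measurable_wait hf (measurableSet_Uset hφ) i (.of_discrete (s := Set.Iic (p : ℕ∞))))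

theorem measurableSet_Qk (hf : Measurable f) (hφ : Measurable φ) (κ : ℕ) :
    MeasurableSet (Qk f φ p u κ) :=
  (measurableSet_Upk hf hφ κ).inter
    (measurable_wait hf (measurableSet_Uset hφ) _ (.of_discrete (s := Set.Ioi (p : ℕ∞))))

theorem measurableSet_U0 (hf : Measurable f) (hφ : Measurable φ) :
    MeasurableSet (U0 f φ p u t) :=
  (MeasurableSet.iUnion fun κ => (measurableSet_Qk hf hφ κ).inter
    (measurableSet_lt measurable_const (measurable_excessSum hf hφ κ))).union
    (.iInter fun κ => measurableSet_Upk hf hφ κ)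

theorem measurableSet_R0 (hf : Measurable f) (hφ : Measurable φ) :
    MeasurableSet (R0 f φ p u t) :=
  (measurableSet_U0 hf hφ).inter
    (measurable_hitTime hf (measurableSet_U0 hf hφ) (.of_discrete (s := Set.Ioi (p : ℕ∞))))

end Measurability

section Avoidance

variable [MeasurableSpace X] {μ : Measure X} [IsProbabilityMeasure μ] {f : X → X} {R : Set X}

theorem measureReal_iInter_preimage_compl_eq (hf : MeasurePreserving f μ μ)
    (hR : MeasurableSet R) (s : ℕ) :
    μ.real (⋂ i ∈ Finset.range s, f^[i] ⁻¹' Rᶜ) = 1 - s * μ.real R +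
      ∑ i ∈ Finset.range s, μ.real (f^[i] ⁻¹' R \ ⋂ j ∈ Finset.range i, f^[j] ⁻¹' Rᶜ) := by
  induction s with
  | zero => simp
  | succ s ih =>
    set B := ⋂ j ∈ Finset.range s, f^[j] ⁻¹' Rᶜ
    have hB : MeasurableSet B :=
      .biInter (Set.to_countable _) fun j _ => hf.measurable.iterate j hR.compl
    have hsucc : ⋂ j ∈ Finset.range (s + 1), f^[j] ⁻¹' Rᶜ = B \ f^[s] ⁻¹' R := by
      rw [Finset.range_add_one, Finset.set_biInter_insert, Set.inter_comm, Set.preimage_compl]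
      rfl
    have hB_split := measureReal_inter_add_sdiff (μ := μ) (s := B) (hf.measurable.iterate s hR)
    have hR_split := measureReal_inter_add_sdiff (μ := μ) (s := f^[s] ⁻¹' R) hB
    have hpre : μ.real (f^[s] ⁻¹' R) = μ.real R :=
      (hf.iterate s).measureReal_preimage hR.nullMeasurableSet
    rw [Set.inter_comm] at hR_split
    rw [hsucc, Finset.sum_range_succ]
    push_cast
    linarith

theorem abs_measureReal_iInter_preimage_compl_sub_le (hf : MeasurePreserving f μ μ)
    (hR : MeasurableSet R) {p : ℕ} {V : ℕ → Set X}
    (hV : ∀ x ∈ R, ∀ k, 1 ≤ k → f^[k] x ∈ R → ∃ c, p < c ∧ c ≤ k ∧ f^[k - c] x ∈ V c)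
    (s : ℕ) :
    |μ.real (⋂ i ∈ Finset.range s, f^[i] ⁻¹' Rᶜ) - (1 - s * μ.real R)| ≤
      s * ∑ c ∈ Finset.Ico (p + 1) s, μ.real (V c) := by
  rw [measureReal_iInter_preimage_compl_eq hf hR, add_sub_cancel_left,
    abs_of_nonneg (Finset.sum_nonneg fun _ _ => measureReal_nonneg)]
  refine (Finset.sum_le_sum (g := fun _ => ∑ c ∈ Finset.Ico (p + 1) s, μ.real (V c))
    fun i hi => ?_).trans_eq (by simp)
  have hcover : f^[i] ⁻¹' R \ ⋂ j ∈ Finset.range i, f^[j] ⁻¹' Rᶜ ⊆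
      ⋃ c ∈ Finset.Ico (p + 1) s, f^[i - c] ⁻¹' V c := by
    rintro x ⟨hxi, hxB⟩
    simp only [Set.mem_iInter, Finset.mem_range, Set.mem_preimage, Set.mem_compl_iff,
      not_forall, not_not] at hxB
    obtain ⟨j, hji, hxj⟩ := hxB
    obtain ⟨c, hpc, hc, hxc⟩ := hV _ hxj (i - j) (by omega)
      (by rwa [← Function.iterate_add_apply, Nat.sub_add_cancel hji.le])
    rw [← Function.iterate_add_apply, show i - j - c + j = i - c by omega] at hxc
    exact Set.mem_biUnion (Finset.mem_Ico.2 ⟨hpc, by simp at hi; omega⟩) hxc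
  calc μ.real (f^[i] ⁻¹' R \ ⋂ j ∈ Finset.range i, f^[j] ⁻¹' Rᶜ)
      ≤ ∑ c ∈ Finset.Ico (p + 1) s, μ.real (f^[i - c] ⁻¹' V c) :=
        (measureReal_mono hcover (measure_ne_top _ _)).trans (measureReal_biUnion_finset_le _ _)
    _ ≤ ∑ c ∈ Finset.Ico (p + 1) s, μ.real (V c) :=
        Finset.sum_le_sum fun c _ =>
          ENNReal.toReal_mono (measure_ne_top _ _) ((hf.iterate _).measure_preimage_le _)

end Avoidance

theorem statement1_general {X : Type*} [MeasurableSpace X] (μ : Measure X) [IsProbabilityMeasure μ]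
    (f : X → X) (φ : X → ℝ) (hf : MeasurePreserving f μ μ) (hφ : Measurable φ)
    (p s : ℕ) (t : ℝ) (u : ℝ) :
    |(μ (⋂ i ∈ Finset.range s, f^[i] ⁻¹' (R0 f φ p u t)ᶜ)).toReal -
        (1 - (s : ℝ) * (μ (R0 f φ p u t)).toReal)| ≤
      (s : ℝ) * ∑ j ∈ Finset.Ico (p + 1) s,
        (μ (Qk f φ p u 0 ∩ f^[j] ⁻¹' (U0 f φ p u t))).toReal :=
  abs_measureReal_iInter_preimage_compl_sub_le hf (measurableSet_R0 hf.measurable hφ)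
    (fun _ hx _ hk hfk => exists_mem_Qk_zero_of_mem_R0 hx hk hfk.1) s

/-- Statement 1 (Lemma estimating the probability of not entering `R_{p,0}(u,x)` during `[0,s)`). -/
theorem statement1 {X : Type*} [MeasurableSpace X] (μ : Measure X) [IsProbabilityMeasure μ]
    (f : X → X) (φ : X → ℝ) (hf : MeasurePreserving f μ μ) (hφ : Measurable φ)
    (p s : ℕ) (hs : 1 ≤ s) (t : ℝ) (ht : 0 ≤ t) (u : ℝ) :
    |(μ (⋂ i ∈ Finset.range s, f^[i] ⁻¹' (R0 f φ p u t)ᶜ)).toReal -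
        (1 - (s : ℝ) * (μ (R0 f φ p u t)).toReal)| ≤
      (s : ℝ) * ∑ j ∈ Finset.Ico (p + 1) s,
        (μ (Qk f φ p u 0 ∩ f^[j] ⁻¹' (U0 f φ p u t))).toReal :=
  statement1_general μ f φ hf hφ p s t u

end Paper
end
end

section
/- Let u ∈ ℝ, let s ≥ 1 be an integer, let x ≥ 0, and set 𝒜 := Σ_{i=0}^{s−1} (X_i − u)_+ (the sum of all excesses over u during times 0, …, s−1) and V := {X₀ > u} ∩ {(X₀ − u)_+ > x}. Then | ℙ( 𝒜 ≤ x ) − ℙ( ⋂_{i=0}^{s−1} f^{-i}( Vᶜ ) ) | ≤ s · Σ_{j=1}^{s−1} ℙ( {X₀ > u} ∩ f^{-j}({X₀ > u}) ). -/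
/-!
Let `A = {𝒜 ≤ t}` and let `B` be the event that every single excess `(X_i - u)_+`, `i < s`, is at
most `t`; since `t ≥ 0`, `B` is exactly the event of avoiding `V` during `[0, s)`. Clearly `A ⊆ B`,
so the difference of probabilities is `ℙ(B \ A)`. On `B \ A` no excess exceeds `t` but their sum
does, so at least two excesses are positive, at times `i < j < s`; then `f^i z` lies in
`{X₀ > u} ∩ f^{-(j-i)} {X₀ > u}`. A union bound over `i` and `k = j - i`, together with the
invariance of `ℙ`, gives the estimate.
-/

open MeasureTheory Set

theorem Finset.exists_lt_pos_pos_of_forall_le_of_lt_sum {ι : Type*} [LinearOrder ι]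
    {S : Finset ι} {g : ι → ℝ} {t : ℝ} (hg : ∀ i ∈ S, 0 ≤ g i) (ht : 0 ≤ t)
    (hle : ∀ i ∈ S, g i ≤ t) (hlt : t < ∑ i ∈ S, g i) :
    ∃ i ∈ S, ∃ j ∈ S, i < j ∧ 0 < g i ∧ 0 < g j := by
  classical
  have hcard : 1 < (S.filter (0 < g ·)).card := by
    by_contra! hcard
    have hsum : ∑ i ∈ S.filter (0 < g ·), g i = ∑ i ∈ S, g i :=
      Finset.sum_filter_of_ne (p := (0 < g ·)) fun i hi hne => (hg i hi).lt_of_ne' hne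
    have hbound := Finset.sum_le_card_nsmul (S.filter (0 < g ·)) g t
      fun i hi => hle i (Finset.mem_filter.1 hi).1
    rw [hsum, nsmul_eq_mul] at hbound
    have : ((S.filter (0 < g ·)).card : ℝ) * t ≤ t :=
      mul_le_of_le_one_left ht (by exact_mod_cast hcard)
    linarith
  obtain ⟨a, ha, b, hb, hab⟩ := Finset.one_lt_card.1 hcard
  rw [Finset.mem_filter] at ha hb
  rcases hab.lt_or_gt with hab | hab
  · exact ⟨a, ha.1, b, hb.1, hab, ha.2, hb.2⟩
  · exact ⟨b, hb.1, a, ha.1, hab, hb.2, ha.2⟩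

/-- Two visits of the orbit of `z` to `U`, at times `i < j < s`, put `f^[i] z` in
`U ∩ f^[j - i] ⁻¹' U`. -/
theorem setOf_forall_le_sdiff_setOf_sum_le_subset {X : Type*} (f : X → X) (g : X → ℝ)
    (U : Set X) (hg : ∀ z, 0 ≤ g z) (hgU : ∀ z, 0 < g z → z ∈ U) (s : ℕ) {t : ℝ} (ht : 0 ≤ t) :
    {z | ∀ i ∈ Finset.range s, g (f^[i] z) ≤ t} \ {z | ∑ i ∈ Finset.range s, g (f^[i] z) ≤ t} ⊆
      ⋃ k ∈ Finset.Ico 1 s, ⋃ i ∈ Finset.range s, f^[i] ⁻¹' (U ∩ f^[k] ⁻¹' U) := by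
  rintro z ⟨hle, hlt⟩
  obtain ⟨i, hi, j, hj, hij, hgi, hgj⟩ :=
    Finset.exists_lt_pos_pos_of_forall_le_of_lt_sum (fun i _ => hg _) ht hle (not_le.1 hlt)
  rw [Finset.mem_range] at hi hj
  simp only [mem_iUnion, Finset.mem_Ico, Finset.mem_range]
  refine ⟨j - i, ⟨by omega, by omega⟩, i, hi, hgU _ hgi, ?_⟩
  rw [mem_preimage, ← Function.iterate_add_apply, Nat.sub_add_cancel hij.le]
  exact hgU _ hgj

theorem MeasureTheory.MeasurePreserving.measureReal_biUnion_range_iterate_preimage_le {X : Type*}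
    [MeasurableSpace X] {μ : Measure X} [IsFiniteMeasure μ] {f : X → X}
    (hf : MeasurePreserving f μ μ) (s : ℕ) (E : Set X) :
    μ.real (⋃ i ∈ Finset.range s, f^[i] ⁻¹' E) ≤ s * μ.real E := by
  calc μ.real (⋃ i ∈ Finset.range s, f^[i] ⁻¹' E)
      ≤ ∑ i ∈ Finset.range s, μ.real (f^[i] ⁻¹' E) := measureReal_biUnion_finset_le _ _
    _ ≤ ∑ _i ∈ Finset.range s, μ.real E := Finset.sum_le_sum fun i _ =>
        ENNReal.toReal_mono (measure_ne_top μ E) ((hf.iterate i).measure_preimage_le E)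
    _ = s * μ.real E := by rw [Finset.sum_const, Finset.card_range, nsmul_eq_mul]

theorem setOf_lt_inter_setOf_lt_max_sub {X : Type*} (φ : X → ℝ) (u : ℝ) {t : ℝ} (ht : 0 ≤ t) :
    {z | u < φ z} ∩ {z | t < max (φ z - u) 0} = {z | t < max (φ z - u) 0} := by
  refine inter_eq_right.2 fun z (hz : t < max (φ z - u) 0) => show u < φ z from ?_
  rcases lt_max_iff.1 hz with hz | hz <;> linarith

theorem statement2_general {X : Type*} [MeasurableSpace X] (μ : Measure X) [IsProbabilityMeasure μ]
    (f : X → X) (φ : X → ℝ) (hf : MeasurePreserving f μ μ)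
    (u : ℝ) (s : ℕ) (t : ℝ) (ht : 0 ≤ t) :
    |(μ {z | ∑ i ∈ Finset.range s, max (φ (f^[i] z) - u) 0 ≤ t}).toReal -
        (μ (⋂ i ∈ Finset.range s,
          f^[i] ⁻¹' ({z | u < φ z} ∩ {z | t < max (φ z - u) 0})ᶜ)).toReal| ≤
      (s : ℝ) * ∑ j ∈ Finset.Ico 1 s,
        (μ ({z | u < φ z} ∩ f^[j] ⁻¹' {z | u < φ z})).toReal := by
  set g : X → ℝ := fun z => max (φ z - u) 0
  set A := {z | ∑ i ∈ Finset.range s, g (f^[i] z) ≤ t}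
  set B := {z | ∀ i ∈ Finset.range s, g (f^[i] z) ≤ t}
  have hB : (⋂ i ∈ Finset.range s,
      f^[i] ⁻¹' ({z | u < φ z} ∩ {z | t < max (φ z - u) 0})ᶜ) = B := by
    rw [setOf_lt_inter_setOf_lt_max_sub φ u ht]
    ext z
    simp [B, g]
  have hAB : A ⊆ B := fun z hz i hi =>
    (Finset.single_le_sum (f := fun j => g (f^[j] z)) (fun j _ => le_max_right _ _) hi).trans hz
  rw [hB, ← measureReal_def, ← measureReal_def, abs_sub_comm,
    abs_of_nonneg (sub_nonneg.2 (measureReal_mono hAB)), Finset.mul_sum]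
  calc μ.real B - μ.real A
      ≤ μ.real (B \ A) := le_measureReal_sdiff
    _ ≤ μ.real (⋃ k ∈ Finset.Ico 1 s, ⋃ i ∈ Finset.range s,
          f^[i] ⁻¹' ({z | u < φ z} ∩ f^[k] ⁻¹' {z | u < φ z})) :=
        measureReal_mono (setOf_forall_le_sdiff_setOf_sum_le_subset f g _
          (fun z => le_max_right _ _) (fun z hz => by simpa [g] using hz) s ht)
          (measure_ne_top _ _)
    _ ≤ ∑ k ∈ Finset.Ico 1 s, μ.real (⋃ i ∈ Finset.range s,
          f^[i] ⁻¹' ({z | u < φ z} ∩ f^[k] ⁻¹' {z | u < φ z})) :=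
        measureReal_biUnion_finset_le _ _
    _ ≤ _ := Finset.sum_le_sum fun k _ =>
        hf.measureReal_biUnion_range_iterate_preimage_le s _

/-- Statement 2 (`p = 0` case: comparing the distribution of the accumulated excesses
`𝒜 = Σ_{i=0}^{s−1} (X_i − u)_+` with the probability of avoiding
`V = {X₀ > u} ∩ {(X₀ − u)_+ > x}` during `[0,s)`). -/
theorem statement2 {X : Type*} [MeasurableSpace X] (μ : Measure X) [IsProbabilityMeasure μ]
    (f : X → X) (φ : X → ℝ) (hf : MeasurePreserving f μ μ) (hφ : Measurable φ)
    (u : ℝ) (s : ℕ) (hs : 1 ≤ s) (t : ℝ) (ht : 0 ≤ t) :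
    |(μ {z | ∑ i ∈ Finset.range s, max (φ (f^[i] z) - u) 0 ≤ t}).toReal -
        (μ (⋂ i ∈ Finset.range s,
          f^[i] ⁻¹' ({z | u < φ z} ∩ {z | t < max (φ z - u) 0})ᶜ)).toReal| ≤
      (s : ℝ) * ∑ j ∈ Finset.Ico 1 s,
        (μ ({z | u < φ z} ∩ f^[j] ⁻¹' {z | u < φ z})).toReal :=
  statement2_general μ f φ hf u s t ht
end

section
/- Let p ∈ ℕ₀ and let (u_n)_{n≥1} be a sequence of reals such that n·ℙ(X₀ > u_n) → τ for some τ ∈ [0,∞). Set U_n := {X₀ > u_n} and Q_n := U_n ∩ ⋂_{i=1}^{p} f^{-i}( U_nᶜ ). Assume: (i) there exist C ≥ 0 and ρ : ℕ → [0,∞) with Σ_{j≥1} ρ_j < ∞ such that ℙ( Q_n ∩ f^{-j}( U_n ) ) ≤ ℙ(U_n) ( ℙ(Q_n) + C ρ_j ) for all n ≥ 1 and j ≥ 1; (ii) there is a sequence (R_n) of natural numbers with R_n → ∞ such that ℙ( Q_n ∩ f^{-j}( U_n ) ) = 0 whenever p+1 ≤ j < R_n; (iii) (k_n) is a sequence of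 natural numbers with k_n → ∞. Then n · Σ_{j=p+1}^{⌊n/k_n⌋ − 1} ℙ( Q_n ∩ f^{-j}( U_n ) ) → 0 as n → ∞. -/
/-!
Below the return time `R_n` the summands vanish, and from `R_n` on the correlation bound gives
`ℙ(Q_n ∩ f^{-j} U_n) ≤ ℙ(U_n)² + C ℙ(U_n) ρ_j` (as `Q_n ⊆ U_n`). Summing over fewer than `n / k_n`
indices and multiplying by `n`, the sum is at most `a_n (a_n / k_n + C ∑_{j ≥ R_n} ρ_j)` with
`a_n = n ℙ(U_n) → τ`; this tends to `0` because `k_n → ∞` and the tails of `∑ ρ_j` vanish.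
-/

open MeasureTheory Set Filter

/-- `U_n = {X₀ > u_n}`. -/
def Un {X : Type*} (φ : X → ℝ) (u : ℕ → ℝ) (n : ℕ) : Set X := {x | u n < φ x}

/-- `Q_n = U_n ∩ ⋂_{i=1}^{p} f^{-i}(U_nᶜ)`. -/
def Qn {X : Type*} (f : X → X) (φ : X → ℝ) (p : ℕ) (u : ℕ → ℝ) (n : ℕ) : Set X :=
  Un φ u n ∩ ⋂ i ∈ Finset.Icc 1 p, f^[i] ⁻¹' (Un φ u n)ᶜ

open Topology

lemma sum_Ico_le_tsum_nat_add {ρ : ℕ → ℝ} (hρ0 : ∀ j, 0 ≤ ρ j) (hρ : Summable ρ) (a b : ℕ) :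
    ∑ j ∈ Finset.Ico a b, ρ j ≤ ∑' i, ρ (i + a) := by
  rw [Finset.sum_Ico_eq_sum_range]
  simp_rw [add_comm a]
  exact ((summable_nat_add_iff a).mpr hρ).sum_le_tsum _ fun i _ => hρ0 _

lemma sum_Ico_le_of_eq_zero_of_le_mul {w ρ : ℕ → ℝ} {p R m : ℕ} {U Q C : ℝ}
    (hρ0 : ∀ j, 0 ≤ ρ j) (hρ : Summable ρ) (hC : 0 ≤ C) (hU : 0 ≤ U) (hQ : 0 ≤ Q)
    (hw : ∀ j, 1 ≤ j → w j ≤ U * (Q + C * ρ j))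
    (hzero : ∀ j, p + 1 ≤ j → j < R → w j = 0) :
    ∑ j ∈ Finset.Ico (p + 1) m, w j ≤ U * (m * Q + C * ∑' i, ρ (i + R)) := by
  set M := max (p + 1) R
  have h_drop : ∑ j ∈ Finset.Ico (p + 1) m, w j = ∑ j ∈ Finset.Ico M m, w j := by
    refine (Finset.sum_subset (Finset.Ico_subset_Ico (le_max_left _ _) le_rfl)
      fun j hj hjM => ?_).symm
    simp only [Finset.mem_Ico, not_and] at hj hjM
    exact hzero j hj.1 (by omega)
  have h_card : ((Finset.Ico M m).card : ℝ) ≤ m := by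
    rw [Nat.card_Ico]
    exact_mod_cast Nat.sub_le m M
  have h_tail : ∑ j ∈ Finset.Ico M m, ρ j ≤ ∑' i, ρ (i + R) :=
    (Finset.sum_le_sum_of_subset_of_nonneg (Finset.Ico_subset_Ico (le_max_right _ _) le_rfl)
      fun j _ _ => hρ0 j).trans (sum_Ico_le_tsum_nat_add hρ0 hρ R m)
  calc ∑ j ∈ Finset.Ico (p + 1) m, w j
      ≤ ∑ j ∈ Finset.Ico M m, U * (Q + C * ρ j) := by
        rw [h_drop]
        exact Finset.sum_le_sum fun j hj => hw j (by simp only [Finset.mem_Ico] at hj; omega)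
    _ = U * ((Finset.Ico M m).card * Q + C * ∑ j ∈ Finset.Ico M m, ρ j) := by
        rw [← Finset.mul_sum, Finset.sum_add_distrib, Finset.sum_const, nsmul_eq_mul,
          ← Finset.mul_sum]
    _ ≤ U * (m * Q + C * ∑' i, ρ (i + R)) := by gcongr

lemma tendsto_mul_div_add_mul_zero {a t : ℕ → ℝ} {k : ℕ → ℕ} {τ : ℝ} (C : ℝ)
    (ha : Tendsto a atTop (𝓝 τ)) (hk : Tendsto k atTop atTop) (ht : Tendsto t atTop (𝓝 0)) :
    Tendsto (fun n => a n * (a n / k n + C * t n)) atTop (𝓝 0) := by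
  have hk_inv : Tendsto (fun n => (k n : ℝ)⁻¹) atTop (𝓝 0) :=
    tendsto_inv_atTop_zero.comp (tendsto_natCast_atTop_atTop.comp hk)
  simpa [div_eq_mul_inv] using ha.mul ((ha.mul hk_inv).add (ht.const_mul C))

theorem statement6_general {X : Type*} [MeasurableSpace X] (μ : Measure X) [IsProbabilityMeasure μ]
    (f : X → X) (φ : X → ℝ)
    (p : ℕ) (u : ℕ → ℝ) (τ : ℝ)
    (hun : Tendsto (fun n : ℕ => (n : ℝ) * (μ (Un φ u n)).toReal) atTop (nhds τ))
    (C : ℝ) (hC : 0 ≤ C) (ρ : ℕ → ℝ) (hρ0 : ∀ j, 0 ≤ ρ j) (hρ : Summable ρ)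
    (hcor : ∀ n, 1 ≤ n → ∀ j, 1 ≤ j →
      (μ (Qn f φ p u n ∩ f^[j] ⁻¹' Un φ u n)).toReal ≤
        (μ (Un φ u n)).toReal * ((μ (Qn f φ p u n)).toReal + C * ρ j))
    (R : ℕ → ℕ) (hR : Tendsto R atTop atTop)
    (hzero : ∀ n j, p + 1 ≤ j → j < R n → μ (Qn f φ p u n ∩ f^[j] ⁻¹' Un φ u n) = 0)
    (k : ℕ → ℕ) (hk : Tendsto k atTop atTop) :
    Tendsto (fun n : ℕ => (n : ℝ) * ∑ j ∈ Finset.Ico (p + 1) (n / k n),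
      (μ (Qn f φ p u n ∩ f^[j] ⁻¹' Un φ u n)).toReal) atTop (nhds 0) := by
  set a : ℕ → ℝ := fun n => n * μ.real (Un φ u n)
  set tail : ℕ → ℝ := fun n => ∑' i, ρ (i + R n)
  refine squeeze_zero' (Eventually.of_forall fun n => by positivity) ?_
    (tendsto_mul_div_add_mul_zero C hun hk ((tendsto_sum_nat_add ρ).comp hR))
  filter_upwards [eventually_ge_atTop 1] with n hn
  have hQU : μ.real (Qn f φ p u n) ≤ μ.real (Un φ u n) := measureReal_mono inter_subset_left
  have h_sum := sum_Ico_le_of_eq_zero_of_le_mul (p := p) (R := R n) (m := n / k n) hρ0 hρ hC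
    measureReal_nonneg measureReal_nonneg (hcor n hn) fun j hj hjR => by simp [hzero n j hj hjR]
  have h_card : ((n / k n : ℕ) : ℝ) * μ.real (Qn f φ p u n) ≤ a n / k n := by
    rw [mul_div_right_comm]
    exact mul_le_mul Nat.cast_div_le hQU measureReal_nonneg (by positivity)
  calc (n : ℝ) * ∑ j ∈ Finset.Ico (p + 1) (n / k n),
        μ.real (Qn f φ p u n ∩ f^[j] ⁻¹' Un φ u n)
      ≤ n * (μ.real (Un φ u n) * ((n / k n : ℕ) * μ.real (Qn f φ p u n) + C * tail n)) :=
        mul_le_mul_of_nonneg_left h_sum n.cast_nonneg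
    _ ≤ a n * (a n / k n + C * tail n) := by
        rw [← mul_assoc]
        gcongr

/-- condition `D′_p(u_n)*` follows from summable decay of correlations against
`L¹` and divergence of the first return time of `Q_n` to `U_n`. -/
theorem statement6 {X : Type*} [MeasurableSpace X] (μ : Measure X) [IsProbabilityMeasure μ]
    (f : X → X) (φ : X → ℝ) (hf : MeasurePreserving f μ μ) (hφ : Measurable φ)
    (p : ℕ) (u : ℕ → ℝ) (τ : ℝ) (hτ : 0 ≤ τ)
    (hun : Tendsto (fun n : ℕ => (n : ℝ) * (μ (Un φ u n)).toReal) atTop (nhds τ))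
    (C : ℝ) (hC : 0 ≤ C) (ρ : ℕ → ℝ) (hρ0 : ∀ j, 0 ≤ ρ j) (hρ : Summable ρ)
    (hcor : ∀ n, 1 ≤ n → ∀ j, 1 ≤ j →
      (μ (Qn f φ p u n ∩ f^[j] ⁻¹' Un φ u n)).toReal ≤
        (μ (Un φ u n)).toReal * ((μ (Qn f φ p u n)).toReal + C * ρ j))
    (R : ℕ → ℕ) (hR : Tendsto R atTop atTop)
    (hzero : ∀ n j, p + 1 ≤ j → j < R n → μ (Qn f φ p u n ∩ f^[j] ⁻¹' Un φ u n) = 0)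
    (k : ℕ → ℕ) (hk : Tendsto k atTop atTop) :
    Tendsto (fun n : ℕ => (n : ℝ) * ∑ j ∈ Finset.Ico (p + 1) (n / k n),
      (μ (Qn f φ p u n ∩ f^[j] ⁻¹' Un φ u n)).toReal) atTop (nhds 0) :=
  statement6_general μ f φ p u τ hun C hC ρ hρ0 hρ hcor R hR hzero k hk
end

section
/- Let δ > 0 and let g : (0,δ) → ℝ be continuous and strictly decreasing, with L := lim_{t→0⁺} g(t) ∈ ℝ ∪ {+∞} and inverse g⁻¹ defined on the image of g. Suppose there is a function q with values in (0,∞) such that for every y ∈ ℝ, g⁻¹(s + y q(s)) is defined for all s in the domain sufficiently close to L and lim_{s→L⁻} g⁻¹(s + y q(s)) / g⁻¹(s) = e^{−y}. Then for every x > 0, lim_{u→L⁻} ( g( x · g⁻¹(u) ) − u ) / q(u) = − log x. -/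
open Set Filter Topology

/-- The filter of real numbers approaching `L ∈ ℝ ∪ {+∞}` from below
(`atTop` when `L = ⊤`, `𝓝[<] L` when `L` is real). -/
noncomputable def lbelow (L : EReal) : Filter ℝ :=
  Filter.comap (fun x : ℝ => (x : EReal)) (nhdsWithin L (Iio L))

/-!
Fix `x > 0` and a level `y`. If `x < e^{-y}`, the hypothesis gives `x · g⁻¹(u) < g⁻¹(u + y q(u))`
for `u` near `L`, and since `g` is decreasing, `u + y q(u) < g(x · g⁻¹(u))`; if `x > e^{-y}`, the
reverse inequality follows the same way. So `(g(x · g⁻¹(u)) − u)/q(u)` eventually lies above every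
`y < −log x` and below every `y > −log x`.
-/

section Ratio

variable {α : Type*} {l : Filter α} {f h : α → ℝ} {c x : ℝ}

theorem eventually_mul_lt_of_tendsto_div (hh : ∀ᶠ u in l, 0 < h u)
    (hf : Tendsto (fun u => f u / h u) l (𝓝 c)) (hx : x < c) :
    ∀ᶠ u in l, x * h u < f u := by
  filter_upwards [hh, hf.eventually (eventually_gt_nhds hx)] with u hpos hlt
  rwa [lt_div_iff₀ hpos] at hlt

theorem eventually_lt_mul_of_tendsto_div (hh : ∀ᶠ u in l, 0 < h u)
    (hf : Tendsto (fun u => f u / h u) l (𝓝 c)) (hx : c < x) :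
    ∀ᶠ u in l, f u < x * h u := by
  filter_upwards [hh, hf.eventually (eventually_lt_nhds hx)] with u hpos hlt
  rwa [div_lt_iff₀ hpos] at hlt

end Ratio

section LeftInverse

variable {δ t v : ℝ} {g ginv : ℝ → ℝ}

theorem ginv_mem_of_mem_image (hginv : ∀ t ∈ Ioo 0 δ, ginv (g t) = t)
    (hv : v ∈ g '' Ioo 0 δ) : ginv v ∈ Ioo 0 δ := by
  obtain ⟨s, hs, rfl⟩ := hv
  rwa [hginv s hs]

theorem apply_ginv_of_mem_image (hginv : ∀ t ∈ Ioo 0 δ, ginv (g t) = t)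
    (hv : v ∈ g '' Ioo 0 δ) : g (ginv v) = v := by
  obtain ⟨s, hs, rfl⟩ := hv
  rw [hginv s hs]

theorem lt_apply_of_lt_ginv (hga : StrictAntiOn g (Ioo 0 δ))
    (hginv : ∀ t ∈ Ioo 0 δ, ginv (g t) = t) (hv : v ∈ g '' Ioo 0 δ) (ht : 0 < t)
    (htv : t < ginv v) : v < g t := by
  have hvmem := ginv_mem_of_mem_image hginv hv
  calc v = g (ginv v) := (apply_ginv_of_mem_image hginv hv).symm
    _ < g t := hga ⟨ht, htv.trans hvmem.2⟩ hvmem htv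

theorem apply_lt_of_ginv_lt (hga : StrictAntiOn g (Ioo 0 δ))
    (hginv : ∀ t ∈ Ioo 0 δ, ginv (g t) = t) (hv : v ∈ g '' Ioo 0 δ) (ht : t ∈ Ioo 0 δ)
    (hvt : ginv v < t) : g t < v := by
  calc g t < g (ginv v) := hga (ginv_mem_of_mem_image hginv hv) ht hvt
    _ = v := apply_ginv_of_mem_image hginv hv

end LeftInverse

section ObservableBounds

variable {l : Filter ℝ} {δ x y : ℝ} {g ginv q : ℝ → ℝ}

theorem eventually_lt_apply_mul_ginv (hga : StrictAntiOn g (Ioo 0 δ))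
    (hginv : ∀ t ∈ Ioo 0 δ, ginv (g t) = t) (hx : 0 < x)
    (hmem : ∀ᶠ u in l, u ∈ g '' Ioo 0 δ)
    (hy : (∀ᶠ u in l, u + y * q u ∈ g '' Ioo 0 δ) ∧
      Tendsto (fun u => ginv (u + y * q u) / ginv u) l (𝓝 (Real.exp (-y))))
    (hxy : x < Real.exp (-y)) :
    ∀ᶠ u in l, u + y * q u < g (x * ginv u) := by
  have hpos : ∀ᶠ u in l, 0 < ginv u := hmem.mono fun u hu => (ginv_mem_of_mem_image hginv hu).1
  filter_upwards [hpos, hy.1, eventually_mul_lt_of_tendsto_div hpos hy.2 hxy] with u hu hyu hlt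
  exact lt_apply_of_lt_ginv hga hginv hyu (mul_pos hx hu) hlt

theorem eventually_mul_ginv_mem (hginv : ∀ t ∈ Ioo 0 δ, ginv (g t) = t) (hx : 0 < x)
    (hmem : ∀ᶠ u in l, u ∈ g '' Ioo 0 δ)
    (hy : (∀ᶠ u in l, u + y * q u ∈ g '' Ioo 0 δ) ∧
      Tendsto (fun u => ginv (u + y * q u) / ginv u) l (𝓝 (Real.exp (-y))))
    (hxy : x < Real.exp (-y)) :
    ∀ᶠ u in l, x * ginv u ∈ Ioo 0 δ := by
  have hpos : ∀ᶠ u in l, 0 < ginv u := hmem.mono fun u hu => (ginv_mem_of_mem_image hginv hu).1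
  filter_upwards [hpos, hy.1, eventually_mul_lt_of_tendsto_div hpos hy.2 hxy] with u hu hyu hlt
  exact ⟨mul_pos hx hu, hlt.trans (ginv_mem_of_mem_image hginv hyu).2⟩

theorem eventually_apply_mul_ginv_lt (hga : StrictAntiOn g (Ioo 0 δ))
    (hginv : ∀ t ∈ Ioo 0 δ, ginv (g t) = t) (hx : 0 < x)
    (hxmem : ∀ᶠ u in l, x * ginv u ∈ Ioo 0 δ)
    (hy : (∀ᶠ u in l, u + y * q u ∈ g '' Ioo 0 δ) ∧
      Tendsto (fun u => ginv (u + y * q u) / ginv u) l (𝓝 (Real.exp (-y))))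
    (hxy : Real.exp (-y) < x) :
    ∀ᶠ u in l, g (x * ginv u) < u + y * q u := by
  have hpos : ∀ᶠ u in l, 0 < ginv u := hxmem.mono fun u hu => pos_of_mul_pos_right hu.1 hx.le
  filter_upwards [hxmem, hy.1, eventually_lt_mul_of_tendsto_div hpos hy.2 hxy] with u hu hyu hlt
  exact apply_lt_of_ginv_lt hga hginv hyu hu hlt

end ObservableBounds

theorem statement10_general (δ : ℝ) (g ginv : ℝ → ℝ)
    (hga : StrictAntiOn g (Ioo 0 δ))
    (L : EReal)
    (hginv : ∀ t ∈ Ioo 0 δ, ginv (g t) = t)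
    (q : ℝ → ℝ) (hq : ∀ s ∈ g '' Ioo 0 δ, 0 < q s)
    (hlim : ∀ y : ℝ,
      (∀ᶠ s in lbelow L, s + y * q s ∈ g '' Ioo 0 δ) ∧
        Tendsto (fun s => ginv (s + y * q s) / ginv s) (lbelow L) (nhds (Real.exp (-y)))) :
    ∀ x : ℝ, 0 < x →
      Tendsto (fun u => (g (x * ginv u) - u) / q u) (lbelow L) (nhds (-Real.log x)) := by
  intro x hx
  have hmem : ∀ᶠ u in lbelow L, u ∈ g '' Ioo 0 δ := by simpa using (hlim 0).1
  -- `x · g⁻¹(u)` stays in the domain of `g` because it lies below `g⁻¹(u + y q(u))` at the level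
  -- `y = -log (2x)`, where `e^{-y} = 2x > x`
  have hxmem : ∀ᶠ u in lbelow L, x * ginv u ∈ Ioo 0 δ :=
    eventually_mul_ginv_mem hginv hx hmem (hlim (-Real.log (2 * x))) (by
      rw [neg_neg, Real.exp_log (by positivity)]
      linarith)
  rw [tendsto_order]
  refine ⟨fun b hb => ?_, fun b hb => ?_⟩
  · have hxb : x < Real.exp (-b) := by rwa [lt_neg, Real.log_lt_iff_lt_exp hx] at hb
    filter_upwards [hmem, eventually_lt_apply_mul_ginv hga hginv hx hmem (hlim b) hxb]
      with u hu hlt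
    rw [lt_div_iff₀ (hq u hu)]
    linarith
  · have hbx : Real.exp (-b) < x := by rwa [gt_iff_lt, neg_lt, Real.lt_log_iff_exp_lt hx] at hb
    filter_upwards [hmem, eventually_apply_mul_ginv_lt hga hginv hx hxmem (hlim b) hbx]
      with u hu hlt
    rw [div_lt_iff₀ (hq u hu)]
    linarith

/-- Type 1 observables: if `g⁻¹(s + y q(s))/g⁻¹(s) → e^{−y}` as `s → L⁻`
for every `y`, then `(g(x·g⁻¹(u)) − u)/q(u) → −log x` as `u → L⁻`, for every `x > 0`. -/
theorem statement10 (δ : ℝ) (hδ : 0 < δ) (g ginv : ℝ → ℝ)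
    (hgc : ContinuousOn g (Ioo 0 δ)) (hga : StrictAntiOn g (Ioo 0 δ))
    (L : EReal) (hL : Tendsto (fun t => (g t : EReal)) (nhdsWithin 0 (Ioi 0)) (nhds L))
    (hginv : ∀ t ∈ Ioo 0 δ, ginv (g t) = t)
    (q : ℝ → ℝ) (hq : ∀ s ∈ g '' Ioo 0 δ, 0 < q s)
    (hlim : ∀ y : ℝ,
      (∀ᶠ s in lbelow L, s + y * q s ∈ g '' Ioo 0 δ) ∧
        Tendsto (fun s => ginv (s + y * q s) / ginv s) (lbelow L) (nhds (Real.exp (-y)))) :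
    ∀ x : ℝ, 0 < x →
      Tendsto (fun u => (g (x * ginv u) - u) / q u) (lbelow L) (nhds (-Real.log x)) :=
  statement10_general δ g ginv hga L hginv q hq hlim
end

section
/- Let δ > 0 and let g : (0,δ) → ℝ be continuous and strictly decreasing with lim_{t→0⁺} g(t) = +∞, with inverse g⁻¹ defined on the image of g. Let β > 0 and suppose that for every y > 0, lim_{s→∞} g⁻¹(s y) / g⁻¹(s) = y^{−β}. Then for every x > 0, lim_{u→∞} ( g( x · g⁻¹(u) ) − u ) / u = x^{−1/β} − 1. -/
/-! For `y₋ < x ^ (-1/β) < y₊`, regular variation of `g⁻¹` with index `-β` places `x · g⁻¹(u)`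
strictly between `g⁻¹(u y₊)` and `g⁻¹(u y₋)` once `u` is large; applying the decreasing `g`
gives `u y₋ < g (x · g⁻¹(u)) < u y₊`, so `g (x · g⁻¹(u)) / u → x ^ (-1/β)`. -/

open Set Filter Topology

section InverseOfDecreasing

variable {g ginv : ℝ → ℝ} {a b δ : ℝ}

theorem eventually_mem_image_Ioo_of_tendsto_atTop (hab : a < b)
    (hgc : ContinuousOn g (Ioo a b)) (hL : Tendsto g (𝓝[>] a) atTop) :
    ∀ᶠ s in atTop, s ∈ g '' Ioo a b := by
  obtain ⟨c, hc⟩ := exists_between hab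
  filter_upwards [eventually_ge_atTop (g c)] with s hs
  obtain ⟨t, hst, ht⟩ :=
    ((hL.eventually (eventually_ge_atTop s)).and (Ioo_mem_nhdsGT hab)).exists
  exact isPreconnected_Ioo.intermediate_value hc ht hgc ⟨hs, hst⟩

theorem eventually_mem_Ioo_and_apply_leftInverse (hab : a < b)
    (hgc : ContinuousOn g (Ioo a b)) (hL : Tendsto g (𝓝[>] a) atTop)
    (hginv : ∀ t ∈ Ioo a b, ginv (g t) = t) :
    ∀ᶠ s in atTop, ginv s ∈ Ioo a b ∧ g (ginv s) = s := by
  filter_upwards [eventually_mem_image_Ioo_of_tendsto_atTop hab hgc hL]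
  rintro _ ⟨t, ht, rfl⟩
  rw [hginv t ht]
  exact ⟨ht, rfl⟩

theorem tendsto_leftInverse_atTop_nhdsGT (hab : a < b) (hga : StrictAntiOn g (Ioo a b))
    (hP : ∀ᶠ s in atTop, ginv s ∈ Ioo a b ∧ g (ginv s) = s) :
    Tendsto ginv atTop (𝓝[>] a) := by
  refine tendsto_nhdsWithin_iff.2 ⟨tendsto_order.2 ⟨fun a' ha' => ?_, fun c hc => ?_⟩,
    hP.mono fun s hs => hs.1.1⟩
  · exact hP.mono fun s hs => ha'.trans hs.1.1
  · obtain ⟨ε, haε, hεcb⟩ := exists_between (lt_min hc hab)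
    have hε : ε ∈ Ioo a b := ⟨haε, hεcb.trans_le (min_le_right _ _)⟩
    filter_upwards [hP, eventually_gt_atTop (g ε)] with s ⟨hs, hgs⟩ hgεs
    by_contra! hcs
    have : g (ginv s) ≤ g ε :=
      hga.antitoneOn hε hs ((hεcb.trans_le (min_le_left _ _)).le.trans hcs)
    linarith

variable {x y : ℝ}

theorem eventually_mul_lt_apply_of_lt_ratio (hga : StrictAntiOn g (Ioo 0 δ))
    (hP : ∀ᶠ s in atTop, ginv s ∈ Ioo 0 δ ∧ g (ginv s) = s)
    (hmem : ∀ᶠ u in atTop, x * ginv u ∈ Ioo 0 δ) (hy : 0 < y)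
    (hratio : ∀ᶠ u in atTop, x < ginv (u * y) / ginv u) :
    ∀ᶠ u in atTop, u * y < g (x * ginv u) := by
  have hmul : Tendsto (· * y) atTop atTop := tendsto_id.atTop_mul_const hy
  filter_upwards [hP, hmul.eventually hP, hmem, hratio]
    with u ⟨hu, _⟩ ⟨huy, hguy⟩ hxu hlt
  simpa only [hguy] using hga hxu huy ((lt_div_iff₀ hu.1).mp hlt)

theorem eventually_apply_lt_mul_of_ratio_lt (hga : StrictAntiOn g (Ioo 0 δ))
    (hP : ∀ᶠ s in atTop, ginv s ∈ Ioo 0 δ ∧ g (ginv s) = s)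
    (hmem : ∀ᶠ u in atTop, x * ginv u ∈ Ioo 0 δ) (hy : 0 < y)
    (hratio : ∀ᶠ u in atTop, ginv (u * y) / ginv u < x) :
    ∀ᶠ u in atTop, g (x * ginv u) < u * y := by
  have hmul : Tendsto (· * y) atTop atTop := tendsto_id.atTop_mul_const hy
  filter_upwards [hP, hmul.eventually hP, hmem, hratio]
    with u ⟨hu, _⟩ ⟨huy, hguy⟩ hxu hlt
  simpa only [hguy] using hga huy hxu ((div_lt_iff₀ hu.1).mp hlt)

theorem tendsto_apply_mul_leftInverse_div (hga : StrictAntiOn g (Ioo 0 δ))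
    (hP : ∀ᶠ s in atTop, ginv s ∈ Ioo 0 δ ∧ g (ginv s) = s)
    (hmem : ∀ᶠ u in atTop, x * ginv u ∈ Ioo 0 δ) {β : ℝ} (hβ : 0 < β)
    (hlim : ∀ z : ℝ, 0 < z →
      Tendsto (fun s => ginv (s * z) / ginv s) atTop (𝓝 (z ^ (-β))))
    (hy : 0 < y) (hyx : y ^ (-β) = x) :
    Tendsto (fun u => g (x * ginv u) / u) atTop (𝓝 y) := by
  have hβ' : -β < 0 := neg_neg_of_pos hβ
  refine tendsto_order.2 ⟨fun c hc => ?_, fun c hc => ?_⟩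
  · obtain ⟨y', hcy', hy'y⟩ := exists_between (max_lt hc hy)
    have hy' : 0 < y' := (le_max_right _ _).trans_lt hcy'
    have hx : x < y' ^ (-β) := hyx ▸ Real.rpow_lt_rpow_of_neg hy' hy'y hβ'
    filter_upwards [eventually_mul_lt_apply_of_lt_ratio hga hP hmem hy'
      ((hlim y' hy').eventually (eventually_gt_nhds hx)), eventually_gt_atTop 0]
      with u hu hu0
    exact ((le_max_left _ _).trans_lt hcy').trans ((lt_div_iff₀ hu0).2 (by linarith))
  · have hc0 : 0 < c := hy.trans hc
    have hx : c ^ (-β) < x := hyx ▸ Real.rpow_lt_rpow_of_neg hy hc hβ'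
    filter_upwards [eventually_apply_lt_mul_of_ratio_lt hga hP hmem hc0
      ((hlim c hc0).eventually (eventually_lt_nhds hx)), eventually_gt_atTop 0]
      with u hu hu0
    exact (div_lt_iff₀ hu0).2 (by linarith)

end InverseOfDecreasing

/-- Type 2 observables: if `g(t) → +∞` as `t → 0⁺` and
`g⁻¹(sy)/g⁻¹(s) → y^{−β}` as `s → ∞` for every `y > 0`, then
`(g(x·g⁻¹(u)) − u)/u → x^{−1/β} − 1` as `u → ∞`, for every `x > 0`. -/
theorem statement11 (δ : ℝ) (hδ : 0 < δ) (g ginv : ℝ → ℝ)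
    (hgc : ContinuousOn g (Ioo 0 δ)) (hga : StrictAntiOn g (Ioo 0 δ))
    (hL : Tendsto g (nhdsWithin 0 (Ioi 0)) atTop)
    (hginv : ∀ t ∈ Ioo 0 δ, ginv (g t) = t)
    (β : ℝ) (hβ : 0 < β)
    (hlim : ∀ y : ℝ, 0 < y →
      Tendsto (fun s => ginv (s * y) / ginv s) atTop (nhds (y ^ (-β)))) :
    ∀ x : ℝ, 0 < x →
      Tendsto (fun u => (g (x * ginv u) - u) / u) atTop (nhds (x ^ (-1 / β) - 1)) := by
  intro x hx
  have hP := eventually_mem_Ioo_and_apply_leftInverse hδ hgc hL hginv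
  have hmem : ∀ᶠ u in atTop, x * ginv u ∈ Ioo 0 δ :=
    tendsto_leftInverse_atTop_nhdsGT hδ hga hP
      |>.eventually (eventually_nhdsGT_zero_mul_left hx (Ioo_mem_nhdsGT hδ))
  have hyx : (x ^ (-1 / β)) ^ (-β) = x := by
    rw [← Real.rpow_mul hx.le, show -1 / β * -β = 1 by field_simp, Real.rpow_one]
  have hratio := tendsto_apply_mul_leftInverse_div hga hP hmem hβ hlim
    (Real.rpow_pos_of_pos hx _) hyx
  refine (hratio.sub_const 1).congr' ?_
  filter_upwards [eventually_gt_atTop 0] with u hu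
  rw [sub_div, div_self hu.ne']
end

section
/- Let δ > 0 and let g : (0,δ) → ℝ be continuous and strictly decreasing with lim_{t→0⁺} g(t) = D for some D ∈ ℝ, with inverse g⁻¹ defined on the image of g. Let γ > 0 and suppose that for every y > 0, lim_{s→0⁺} g⁻¹(D − s y) / g⁻¹(D − s) = y^{γ}. Then for every x > 0, lim_{u→D⁻} ( g( x · g⁻¹(u) ) − u ) / (D − u) = 1 − x^{1/γ}. -/
/-!
Put `t(s) = g⁻¹(D − s)`, so that `g(t(s)) = D − s` and `t(s) → 0⁺`. For `y > 0` the number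
`g⁻¹(D − sy)` lies on the same side of `x · t(s)` as `y^γ` lies of `x`, eventually in `s → 0⁺`,
because the ratio `g⁻¹(D − sy) / t(s)` tends to `y^γ`. Since `g` is decreasing, comparing the
arguments compares the values `D − sy` and `g(x · t(s))`, so `(D − g(x · t(s))) / s` is
eventually above every `y < x^{1/γ}` and below every `y > x^{1/γ}`.
-/

open Set Filter Topology

lemma tendsto_nhds_of_forall_pos_lt_eventually_lt {α : Type*} {l : Filter α} {f : α → ℝ}
    {c : ℝ} (hc : 0 < c) (hlow : ∀ y, 0 < y → y < c → ∀ᶠ s in l, y < f s)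
    (hup : ∀ y, c < y → ∀ᶠ s in l, f s < y) : Tendsto f l (𝓝 c) :=
  tendsto_order.2 ⟨fun b hb =>
    (hlow (max b (c / 2)) (by positivity) (max_lt hb (half_lt_self hc))).mono
      fun _ hs => (le_max_left _ _).trans_lt hs, hup⟩

lemma tendsto_const_sub_nhdsLT (D : ℝ) : Tendsto (fun u => D - u) (𝓝[<] D) (𝓝[>] 0) := by
  have h : Tendsto (fun u => D - u) (𝓝[<] D) (𝓝[>] (D - D)) := map_subLeft_nhdsLT.le
  rwa [sub_self] at h

lemma tendsto_const_sub_mul_nhdsGT (D : ℝ) {y : ℝ} (hy : 0 < y) :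
    Tendsto (fun s => D - s * y) (𝓝[>] 0) (𝓝[<] D) := by
  refine tendsto_nhdsWithin_iff.2 ⟨?_, ?_⟩
  · have h : Tendsto (fun s => D - s * y) (𝓝 0) (𝓝 (D - 0 * y)) :=
      (continuous_const.sub (continuous_mul_const y)).tendsto 0
    rw [zero_mul, sub_zero] at h
    exact h.mono_left nhdsWithin_le_nhds
  · filter_upwards [self_mem_nhdsWithin] with s (hs : 0 < s)
    exact sub_lt_self D (mul_pos hs hy)

section LeftInverse

variable {a b D : ℝ} {g ginv : ℝ → ℝ}

lemma StrictAntiOn.lt_of_tendsto_nhdsGT (hg : StrictAntiOn g (Ioo a b))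
    (hL : Tendsto g (𝓝[>] a) (𝓝 D)) {t : ℝ} (ht : t ∈ Ioo a b) : g t < D := by
  have hm : (a + t) / 2 ∈ Ioo a b := ⟨by linarith [ht.1], by linarith [ht.1, ht.2]⟩
  have hle : g ((a + t) / 2) ≤ D := by
    refine ge_of_tendsto hL ?_
    filter_upwards [Ioo_mem_nhdsGT hm.1] with t' ht'
    exact (hg ⟨ht'.1, ht'.2.trans hm.2⟩ hm ht'.2).le
  exact (hg hm ht (by linarith [ht.1])).trans_le hle

lemma eventually_mem_image_nhdsLT (hab : a < b) (hgc : ContinuousOn g (Ioo a b))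
    (hg : StrictAntiOn g (Ioo a b)) (hL : Tendsto g (𝓝[>] a) (𝓝 D)) :
    ∀ᶠ u in 𝓝[<] D, u ∈ g '' Ioo a b := by
  have hm : (a + b) / 2 ∈ Ioo a b := ⟨by linarith, by linarith⟩
  filter_upwards [Ioo_mem_nhdsLT (hg.lt_of_tendsto_nhdsGT hL hm)] with u hu
  obtain ⟨t₁, hut₁, ht₁⟩ :=
    ((hL.eventually_const_lt hu.2).and (Ioo_mem_nhdsGT hm.1)).exists
  have hIcc : Icc t₁ ((a + b) / 2) ⊆ Ioo a b := fun z hz =>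
    ⟨ht₁.1.trans_le hz.1, hz.2.trans_lt hm.2⟩
  obtain ⟨t, ht, rfl⟩ :=
    intermediate_value_Ioo' ht₁.2.le (hgc.mono hIcc) ⟨hu.1, hut₁⟩
  exact ⟨t, hIcc (Ioo_subset_Icc_self ht), rfl⟩

lemma eventually_leftInv_mem_Ioo (hab : a < b) (hgc : ContinuousOn g (Ioo a b))
    (hg : StrictAntiOn g (Ioo a b)) (hL : Tendsto g (𝓝[>] a) (𝓝 D))
    (hginv : ∀ t ∈ Ioo a b, ginv (g t) = t) :
    ∀ᶠ u in 𝓝[<] D, ginv u ∈ Ioo a b ∧ g (ginv u) = u := by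
  filter_upwards [eventually_mem_image_nhdsLT hab hgc hg hL] with u ⟨t, ht, htu⟩
  rw [← htu, hginv t ht]
  exact ⟨ht, rfl⟩

lemma tendsto_leftInv_nhdsLT (hab : a < b) (hgc : ContinuousOn g (Ioo a b))
    (hg : StrictAntiOn g (Ioo a b)) (hL : Tendsto g (𝓝[>] a) (𝓝 D))
    (hginv : ∀ t ∈ Ioo a b, ginv (g t) = t) : Tendsto ginv (𝓝[<] D) (𝓝[>] a) := by
  have hinv := eventually_leftInv_mem_Ioo hab hgc hg hL hginv
  refine tendsto_nhdsWithin_iff.2 ⟨tendsto_order.2 ⟨fun c hc => ?_, fun ε hε => ?_⟩,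
    hinv.mono fun _ hu => hu.1.1⟩
  · exact hinv.mono fun _ hu => hc.trans hu.1.1
  · have he : (a + min ε b) / 2 ∈ Ioo a b := by
      constructor <;> linarith [lt_min hε hab, min_le_right ε b]
    filter_upwards [hinv, Ioo_mem_nhdsLT (hg.lt_of_tendsto_nhdsGT hL he)] with u hu hgu
    have hlt : ginv u < (a + min ε b) / 2 := by
      rw [← hg.lt_iff_gt he hu.1, hu.2]
      exact hgu.1
    linarith [min_le_left ε b, hu.1.1]

end LeftInverse

section RegularVariation

variable {δ D : ℝ} {g ginv : ℝ → ℝ}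

lemma eventually_lt_div_iff_ratio_lt (hδ : 0 < δ) (hgc : ContinuousOn g (Ioo 0 δ))
    (hg : StrictAntiOn g (Ioo 0 δ)) (hL : Tendsto g (𝓝[>] 0) (𝓝 D))
    (hginv : ∀ t ∈ Ioo 0 δ, ginv (g t) = t) {x y : ℝ} (hx : 0 < x) (hy : 0 < y) :
    ∀ᶠ s in 𝓝[>] 0,
      (y < (D - g (x * ginv (D - s))) / s ↔ ginv (D - s * y) / ginv (D - s) < x) ∧
      ((D - g (x * ginv (D - s))) / s < y ↔ x < ginv (D - s * y) / ginv (D - s)) := by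
  have hinv := eventually_leftInv_mem_Ioo hδ hgc hg hL hginv
  have hD : Tendsto (fun s => D - s) (𝓝[>] 0) (𝓝[<] D) := by
    simpa using tendsto_const_sub_mul_nhdsGT D one_pos
  have hsmall : ∀ᶠ s in 𝓝[>] 0, ginv (D - s) ∈ Ioo 0 (δ / x) :=
    hD.eventually ((tendsto_leftInv_nhdsLT hδ hgc hg hL hginv).eventually
      (Ioo_mem_nhdsGT (div_pos hδ hx)))
  filter_upwards [self_mem_nhdsWithin, (tendsto_const_sub_mul_nhdsGT D hy).eventually hinv,
    hsmall] with s (hs : 0 < s) ⟨hmem, hgy⟩ ⟨ht, htδ⟩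
  have hxt : x * ginv (D - s) ∈ Ioo 0 δ :=
    ⟨mul_pos hx ht, by rwa [lt_div_iff₀' hx] at htδ⟩
  rw [lt_div_iff₀ hs, div_lt_iff₀ hs, div_lt_iff₀ ht, lt_div_iff₀ ht,
    ← hg.lt_iff_gt hxt hmem, ← hg.lt_iff_gt hmem hxt, hgy]
  constructor <;> constructor <;> intro h <;> linarith

lemma tendsto_sub_apply_mul_leftInv_div (hδ : 0 < δ) (hgc : ContinuousOn g (Ioo 0 δ))
    (hg : StrictAntiOn g (Ioo 0 δ)) (hL : Tendsto g (𝓝[>] 0) (𝓝 D))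
    (hginv : ∀ t ∈ Ioo 0 δ, ginv (g t) = t) {γ : ℝ} (hγ : 0 < γ)
    (hlim : ∀ y : ℝ, 0 < y →
      Tendsto (fun s => ginv (D - s * y) / ginv (D - s)) (𝓝[>] 0) (𝓝 (y ^ γ)))
    {x : ℝ} (hx : 0 < x) :
    Tendsto (fun s => (D - g (x * ginv (D - s))) / s) (𝓝[>] 0) (𝓝 (x ^ (1 / γ))) := by
  rw [one_div]
  refine tendsto_nhds_of_forall_pos_lt_eventually_lt (Real.rpow_pos_of_pos hx _)
    (fun y hy hyα => ?_) (fun y hyα => ?_)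
  · rw [Real.lt_rpow_inv_iff_of_pos hy.le hx.le hγ] at hyα
    filter_upwards [(hlim y hy).eventually_lt_const hyα,
      eventually_lt_div_iff_ratio_lt hδ hgc hg hL hginv hx hy] with s hratio hcmp
    exact hcmp.1.2 hratio
  · have hy : 0 < y := (Real.rpow_pos_of_pos hx _).trans hyα
    rw [Real.rpow_inv_lt_iff_of_pos hx.le hy.le hγ] at hyα
    filter_upwards [(hlim y hy).eventually_const_lt hyα,
      eventually_lt_div_iff_ratio_lt hδ hgc hg hL hginv hx hy] with s hratio hcmp
    exact hcmp.2.2 hratio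

end RegularVariation

/-- Type 3 observables: if `g(t) → D` as `t → 0⁺` and
`g⁻¹(D − sy)/g⁻¹(D − s) → y^γ` as `s → 0⁺` for every `y > 0`, then
`(g(x·g⁻¹(u)) − u)/(D − u) → 1 − x^{1/γ}` as `u → D⁻`, for every `x > 0`. -/
theorem statement12 (δ : ℝ) (hδ : 0 < δ) (g ginv : ℝ → ℝ)
    (hgc : ContinuousOn g (Ioo 0 δ)) (hga : StrictAntiOn g (Ioo 0 δ))
    (D : ℝ) (hL : Tendsto g (nhdsWithin 0 (Ioi 0)) (nhds D))
    (hginv : ∀ t ∈ Ioo 0 δ, ginv (g t) = t)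
    (γ : ℝ) (hγ : 0 < γ)
    (hlim : ∀ y : ℝ, 0 < y →
      Tendsto (fun s => ginv (D - s * y) / ginv (D - s)) (nhdsWithin 0 (Ioi 0))
        (nhds (y ^ γ))) :
    ∀ x : ℝ, 0 < x →
      Tendsto (fun u => (g (x * ginv u) - u) / (D - u)) (nhdsWithin D (Iio D))
        (nhds (1 - x ^ (1 / γ))) := by
  intro x hx
  have key := (tendsto_sub_apply_mul_leftInv_div hδ hgc hga hL hginv hγ hlim hx).comp
    (tendsto_const_sub_nhdsLT D)
  refine (tendsto_const_nhds.sub key).congr' ?_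
  filter_upwards [self_mem_nhdsWithin] with u (hu : u < D)
  have hDu : D - u ≠ 0 := (sub_pos.2 hu).ne'
  simp only [Function.comp_apply, sub_sub_cancel]
  field_simp
  ring
end

section
/- Let δ > 0 and let g : (0,δ) → ℝ be continuous and strictly decreasing, with L := lim_{t→0⁺} g(t) ∈ ℝ ∪ {+∞} and inverse g⁻¹. Suppose there is a function q with values in (0,∞) such that for every y ∈ ℝ, g⁻¹(s + y q(s)) is defined for all s in the domain sufficiently close to L and lim_{s→L⁻} g⁻¹(s + y q(s)) / g⁻¹(s) = e^{−y}. Let M > 1 and for κ ∈ ℕ₀ and u in the image of g define g_{κ,u}(t) := Σ_{i=0}^{κ} ( g(M^i t) − u ). Then for every κ ∈ ℕ₀ and every x > 0, lim_{u→L⁻} g_{κ,u}( x · g⁻¹(u) ) / q(u) = −(κ+1) log x − (κ(κ+1)/2) · log M. -/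
/-!
Put `t = g⁻¹(u)`. For `c > 0` and `y ∈ ℝ`, the hypothesis on `q` says that eventually
`g⁻¹(u + y q(u)) / t` lies on the same side of `c` as `e^{-y}`; since `g` is decreasing this
places `g(c t)` on the corresponding side of `u + y q(u)`. Hence
`(g(c t) − u) / q(u) → −log c`, and summing over `c = Mⁱ x`, `i ≤ κ`, gives the limit.
-/

open Set Filter Topology

namespace RegularlyVaryingInverse

variable {S : Set ℝ} {g ginv q : ℝ → ℝ} {l : Filter ℝ}

theorem eventually_mem_image
    (hlim : ∀ y : ℝ, ∀ᶠ s in l, s + y * q s ∈ g '' S) :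
    ∀ᶠ u in l, u ∈ g '' S := by
  simpa using hlim 0

theorem eventually_ginv_shift_mem (hginv : ∀ t ∈ S, ginv (g t) = t)
    (hlim : ∀ y : ℝ, ∀ᶠ s in l, s + y * q s ∈ g '' S) (y : ℝ) :
    ∀ᶠ u in l, ginv (u + y * q u) ∈ S ∧ g (ginv (u + y * q u)) = u + y * q u := by
  filter_upwards [hlim y] with u ⟨t, ht, hgt⟩
  rw [← hgt, hginv t ht]
  exact ⟨ht, rfl⟩

theorem eventually_ginv_pos (hS : S ⊆ Ioi 0) (hginv : ∀ t ∈ S, ginv (g t) = t)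
    (hlim : ∀ y : ℝ, ∀ᶠ s in l, s + y * q s ∈ g '' S) :
    ∀ᶠ u in l, 0 < ginv u := by
  filter_upwards [eventually_ginv_shift_mem hginv hlim 0] with u hu
  simpa using hS hu.1

section Ratio

variable (hS : S ⊆ Ioi 0) (hginv : ∀ t ∈ S, ginv (g t) = t)
  (hlim : ∀ y : ℝ, (∀ᶠ s in l, s + y * q s ∈ g '' S) ∧
    Tendsto (fun s => ginv (s + y * q s) / ginv s) l (𝓝 (Real.exp (-y))))
include hS hginv hlim

theorem eventually_mul_ginv_lt_ginv_shift {c y : ℝ} (hcy : c < Real.exp (-y)) :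
    ∀ᶠ u in l, c * ginv u < ginv (u + y * q u) := by
  filter_upwards [(hlim y).2.eventually (eventually_gt_nhds hcy),
    eventually_ginv_pos hS hginv fun y => (hlim y).1] with u hu hpos
  exact (lt_div_iff₀ hpos).1 hu

theorem eventually_ginv_shift_lt_mul_ginv {c y : ℝ} (hcy : Real.exp (-y) < c) :
    ∀ᶠ u in l, ginv (u + y * q u) < c * ginv u := by
  filter_upwards [(hlim y).2.eventually (eventually_lt_nhds hcy),
    eventually_ginv_pos hS hginv fun y => (hlim y).1] with u hu hpos
  exact (div_lt_iff₀ hpos).1 hu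

/-- `c · g⁻¹(u)` is squeezed between `g⁻¹(u + y q(u))` for `y = -log c ± 1`. -/
theorem eventually_mul_ginv_mem [S.OrdConnected] {c : ℝ} (hc : 0 < c) :
    ∀ᶠ u in l, c * ginv u ∈ S := by
  have hlo : Real.exp (-(-Real.log c + 1)) < c := by
    rw [neg_add, neg_neg, Real.exp_add, Real.exp_log hc]
    exact mul_lt_of_lt_one_right hc (Real.exp_lt_one_iff.2 (by norm_num))
  have hhi : c < Real.exp (-(-Real.log c - 1)) := by
    rw [neg_sub, sub_neg_eq_add, Real.exp_add, Real.exp_log hc]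
    exact lt_mul_of_one_lt_left hc (Real.one_lt_exp_iff.2 one_pos)
  filter_upwards [eventually_ginv_shift_lt_mul_ginv hS hginv hlim hlo,
    eventually_mul_ginv_lt_ginv_shift hS hginv hlim hhi,
    eventually_ginv_shift_mem hginv (fun y => (hlim y).1) (-Real.log c + 1),
    eventually_ginv_shift_mem hginv (fun y => (hlim y).1) (-Real.log c - 1)]
    with u hlt hgt hmem₁ hmem₂
  exact Set.OrdConnected.out ‹_› hmem₁.1 hmem₂.1 ⟨hlt.le, hgt.le⟩

theorem tendsto_sub_div [S.OrdConnected] (hg : StrictAntiOn g S)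
    (hq : ∀ s ∈ g '' S, 0 < q s) {c : ℝ} (hc : 0 < c) :
    Tendsto (fun u => (g (c * ginv u) - u) / q u) l (𝓝 (-Real.log c)) := by
  have hshift := eventually_ginv_shift_mem hginv (fun y => (hlim y).1)
  have hmul := eventually_mul_ginv_mem hS hginv hlim hc
  have hqpos : ∀ᶠ u in l, 0 < q u := by
    filter_upwards [eventually_mem_image fun y => (hlim y).1] with u hu using hq u hu
  refine tendsto_order.2 ⟨fun y hy => ?_, fun y hy => ?_⟩
  · have hcy : c < Real.exp (-y) := by
      rw [← Real.exp_log hc]; exact Real.exp_lt_exp.2 (by linarith)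
    filter_upwards [eventually_mul_ginv_lt_ginv_shift hS hginv hlim hcy, hshift y, hmul, hqpos]
      with u hlt ⟨hw, hgw⟩ hcu hqu
    have := hg hcu hw hlt
    rw [hgw] at this
    rw [lt_div_iff₀ hqu]
    linarith
  · have hcy : Real.exp (-y) < c := by
      rw [← Real.exp_log hc]; exact Real.exp_lt_exp.2 (by linarith)
    filter_upwards [eventually_ginv_shift_lt_mul_ginv hS hginv hlim hcy, hshift y, hmul, hqpos]
      with u hlt ⟨hw, hgw⟩ hcu hqu
    have := hg hw hcu hlt
    rw [hgw] at this
    rw [div_lt_iff₀ hqu]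
    linarith

end Ratio

end RegularlyVaryingInverse

theorem sum_range_neg_log_pow_mul {M x : ℝ} (hM : 0 < M) (hx : 0 < x) (κ : ℕ) :
    ∑ i ∈ Finset.range (κ + 1), -Real.log (M ^ i * x) =
      -((κ : ℝ) + 1) * Real.log x - ((κ : ℝ) * ((κ : ℝ) + 1) / 2) * Real.log M := by
  induction κ with
  | zero => simp
  | succ κ ih =>
    rw [Finset.sum_range_succ, ih, Real.log_mul (pow_pos hM _).ne' hx.ne', Real.log_pow]
    push_cast
    ring

theorem statement13_general (δ : ℝ) (g ginv : ℝ → ℝ)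
    (hga : StrictAntiOn g (Ioo 0 δ))
    (L : EReal)
    (hginv : ∀ t ∈ Ioo 0 δ, ginv (g t) = t)
    (q : ℝ → ℝ) (hq : ∀ s ∈ g '' Ioo 0 δ, 0 < q s)
    (hlim : ∀ y : ℝ,
      (∀ᶠ s in lbelow L, s + y * q s ∈ g '' Ioo 0 δ) ∧
        Tendsto (fun s => ginv (s + y * q s) / ginv s) (lbelow L) (nhds (Real.exp (-y))))
    (M : ℝ) (hM : 1 < M)
    (gk : ℕ → ℝ → ℝ → ℝ)
    (hgk : ∀ (κ : ℕ) (u t : ℝ), gk κ u t = ∑ i ∈ Finset.range (κ + 1), (g (M ^ i * t) - u)) :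
    ∀ (κ : ℕ) (x : ℝ), 0 < x →
      Tendsto (fun u => gk κ u (x * ginv u) / q u) (lbelow L)
        (nhds (-((κ : ℝ) + 1) * Real.log x - ((κ : ℝ) * ((κ : ℝ) + 1) / 2) * Real.log M)) := by
  intro κ x hx
  have hMpos : 0 < M := one_pos.trans hM
  have hsum := tendsto_finsetSum (Finset.range (κ + 1)) fun i _ =>
    RegularlyVaryingInverse.tendsto_sub_div (fun _ ht => ht.1) hginv hlim hga hq
      (c := M ^ i * x) (by positivity)
  rw [sum_range_neg_log_pow_mul hMpos hx] at hsum
  refine hsum.congr fun u => ?_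
  simp only [hgk, Finset.sum_div, mul_assoc]

/-- Type 1 computation in the AOT analysis: with
`g_{κ,u}(t) = Σ_{i=0}^{κ}(g(Mⁱt) − u)`, one has
`g_{κ,u}(x·g⁻¹(u))/q(u) → −(κ+1)·log x − (κ(κ+1)/2)·log M` as `u → L⁻`. -/
theorem statement13 (δ : ℝ) (hδ : 0 < δ) (g ginv : ℝ → ℝ)
    (hgc : ContinuousOn g (Ioo 0 δ)) (hga : StrictAntiOn g (Ioo 0 δ))
    (L : EReal) (hL : Tendsto (fun t => (g t : EReal)) (nhdsWithin 0 (Ioi 0)) (nhds L))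
    (hginv : ∀ t ∈ Ioo 0 δ, ginv (g t) = t)
    (q : ℝ → ℝ) (hq : ∀ s ∈ g '' Ioo 0 δ, 0 < q s)
    (hlim : ∀ y : ℝ,
      (∀ᶠ s in lbelow L, s + y * q s ∈ g '' Ioo 0 δ) ∧
        Tendsto (fun s => ginv (s + y * q s) / ginv s) (lbelow L) (nhds (Real.exp (-y))))
    (M : ℝ) (hM : 1 < M)
    (gk : ℕ → ℝ → ℝ → ℝ)
    (hgk : ∀ (κ : ℕ) (u t : ℝ), gk κ u t = ∑ i ∈ Finset.range (κ + 1), (g (M ^ i * t) - u)) :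
    ∀ (κ : ℕ) (x : ℝ), 0 < x →
      Tendsto (fun u => gk κ u (x * ginv u) / q u) (lbelow L)
        (nhds (-((κ : ℝ) + 1) * Real.log x - ((κ : ℝ) * ((κ : ℝ) + 1) / 2) * Real.log M)) :=
  statement13_general δ g ginv hga L hginv q hq hlim M hM gk hgk
end

section
/- Let δ > 0 and let g : (0,δ) → ℝ be continuous and strictly decreasing with lim_{t→0⁺} g(t) = +∞, with inverse g⁻¹. Let β > 0 and suppose that for every y > 0, lim_{s→∞} g⁻¹(s y) / g⁻¹(s) = y^{−β}. Let M > 1 and for κ ∈ ℕ₀ and u in the image of g define g_{κ,u}(t) := Σ_{i=0}^{κ} ( g(M^i t) − u ). Then for every κ ∈ ℕ₀ and every x > 0, lim_{u→∞} g_{κ,u}( x · g⁻¹(u) ) / u = ( (1 − M^{−(κ+1)/β}) / (1 − M^{−1/β}) ) · x^{−1/β} − (κ+1). -/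
/-!
Every large `u` is a value of `g` near `0` (intermediate value theorem), so `g (g⁻¹ u) = u` and
`g⁻¹ u → 0⁺`. Regular variation of `g⁻¹` then transfers to `g`: if `c < a ^ (-β)`, eventually
`c * g⁻¹ u < g⁻¹ (u * a)`, and as `g` decreases, `g (c * g⁻¹ u) > u * a`; symmetrically from
above. Hence `g (c * g⁻¹ u) / u → c ^ (-1/β)` for every `c > 0`, and with `c = Mⁱ x` the limit of
`g_{κ,u} (x * g⁻¹ u) / u` is the geometric sum `∑ (Mⁱ x) ^ (-1/β) - (κ + 1)`.
-/

open Set Filter Topology Real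

lemma sum_range_pow_mul_rpow {M x : ℝ} (hM : 0 < M) (hx : 0 ≤ x) {p : ℝ} (hp : M ^ p ≠ 1)
    (n : ℕ) :
    ∑ i ∈ Finset.range n, (M ^ i * x) ^ p = (1 - M ^ (n * p)) / (1 - M ^ p) * x ^ p := by
  have hterm (i : ℕ) : (M ^ i * x) ^ p = (M ^ p) ^ i * x ^ p := by
    rw [mul_rpow (by positivity) hx, ← rpow_natCast, ← rpow_natCast, ← rpow_mul hM.le,
      ← rpow_mul hM.le, mul_comm (i : ℝ)]
  rw [Finset.sum_congr rfl fun i _ => hterm i, ← Finset.sum_mul, geom_sum_eq hp,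
    ← rpow_natCast, ← rpow_mul hM.le, mul_comm p, ← neg_sub, ← neg_sub 1, neg_div_neg_eq]

section InverseFunction

variable {δ : ℝ} {g ginv : ℝ → ℝ}

lemma exists_mem_Ioc_apply_eq_of_le (hgc : ContinuousOn g (Ioo 0 δ))
    (hL : Tendsto g (𝓝[>] 0) atTop) {s u : ℝ} (hs : s ∈ Ioo 0 δ) (hu : g s ≤ u) :
    ∃ t ∈ Ioc 0 s, g t = u := by
  obtain ⟨t', hut', ht'⟩ := ((hL.eventually_ge_atTop u).and (Ioc_mem_nhdsGT hs.1)).exists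
  obtain ⟨t, ht, rfl⟩ := intermediate_value_Icc' ht'.2
    (hgc.mono fun y hy => ⟨ht'.1.trans_le hy.1, hy.2.trans_lt hs.2⟩) ⟨hu, hut'⟩
  exact ⟨t, ⟨ht'.1.trans_le ht.1, ht.2⟩, rfl⟩

lemma eventually_ginv_mem_Ioc_and_apply_ginv (hgc : ContinuousOn g (Ioo 0 δ))
    (hL : Tendsto g (𝓝[>] 0) atTop) (hginv : ∀ t ∈ Ioo 0 δ, ginv (g t) = t)
    {s : ℝ} (hs : s ∈ Ioo 0 δ) :
    ∀ᶠ u in atTop, ginv u ∈ Ioc 0 s ∧ g (ginv u) = u := by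
  filter_upwards [eventually_ge_atTop (g s)] with u hu
  obtain ⟨t, ht, rfl⟩ := exists_mem_Ioc_apply_eq_of_le hgc hL hs hu
  rw [hginv t ⟨ht.1, ht.2.trans_lt hs.2⟩]
  exact ⟨ht, rfl⟩

lemma eventually_apply_ginv (hδ : 0 < δ) (hgc : ContinuousOn g (Ioo 0 δ))
    (hL : Tendsto g (𝓝[>] 0) atTop) (hginv : ∀ t ∈ Ioo 0 δ, ginv (g t) = t) :
    ∀ᶠ u in atTop, g (ginv u) = u :=
  (eventually_ginv_mem_Ioc_and_apply_ginv hgc hL hginv ⟨half_pos hδ, half_lt_self hδ⟩).mono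
    fun _ hu => hu.2

lemma tendsto_ginv_nhdsGT (hδ : 0 < δ) (hgc : ContinuousOn g (Ioo 0 δ))
    (hL : Tendsto g (𝓝[>] 0) atTop) (hginv : ∀ t ∈ Ioo 0 δ, ginv (g t) = t) :
    Tendsto ginv atTop (𝓝[>] 0) := by
  refine (nhdsGT_basis 0).tendsto_right_iff.2 fun b hb => ?_
  have hs : min (b / 2) (δ / 2) ∈ Ioo 0 δ :=
    ⟨by positivity, (min_le_right _ _).trans_lt (half_lt_self hδ)⟩
  filter_upwards [eventually_ginv_mem_Ioc_and_apply_ginv hgc hL hginv hs] with u hu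
  exact ⟨hu.1.1, hu.1.2.trans_lt ((min_le_left _ _).trans_lt (half_lt_self hb))⟩

lemma eventually_const_mul_ginv_mem_Ioo (hδ : 0 < δ) (hgc : ContinuousOn g (Ioo 0 δ))
    (hL : Tendsto g (𝓝[>] 0) atTop) (hginv : ∀ t ∈ Ioo 0 δ, ginv (g t) = t)
    {c : ℝ} (hc : 0 < c) :
    ∀ᶠ u in atTop, c * ginv u ∈ Ioo 0 δ := by
  filter_upwards [tendsto_ginv_nhdsGT hδ hgc hL hginv (Ioo_mem_nhdsGT (div_pos hδ hc))]
    with u hu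
  exact ⟨mul_pos hc hu.1, (lt_div_iff₀' hc).1 hu.2⟩

lemma eventually_lt_apply_const_mul_ginv_div (hδ : 0 < δ) (hgc : ContinuousOn g (Ioo 0 δ))
    (hga : StrictAntiOn g (Ioo 0 δ)) (hL : Tendsto g (𝓝[>] 0) atTop)
    (hginv : ∀ t ∈ Ioo 0 δ, ginv (g t) = t) {a c : ℝ} (ha : 0 < a) (hc : 0 < c)
    (hlt : ∀ᶠ u in atTop, c * ginv u < ginv (u * a)) :
    ∀ᶠ u in atTop, a < g (c * ginv u) / u := by
  have hmul : Tendsto (· * a) atTop atTop := tendsto_id.atTop_mul_const ha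
  filter_upwards [hlt, eventually_const_mul_ginv_mem_Ioo hδ hgc hL hginv hc,
    hmul.eventually (eventually_const_mul_ginv_mem_Ioo hδ hgc hL hginv one_pos),
    hmul.eventually (eventually_apply_ginv hδ hgc hL hginv), eventually_gt_atTop 0]
    with u hlt hc_mem ha_mem hga_eq hu
  rw [one_mul] at ha_mem
  rw [lt_div_iff₀ hu, mul_comm a, ← hga_eq]
  exact hga hc_mem ha_mem hlt

lemma eventually_apply_const_mul_ginv_div_lt (hδ : 0 < δ) (hgc : ContinuousOn g (Ioo 0 δ))
    (hga : StrictAntiOn g (Ioo 0 δ)) (hL : Tendsto g (𝓝[>] 0) atTop)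
    (hginv : ∀ t ∈ Ioo 0 δ, ginv (g t) = t) {b c : ℝ} (hb : 0 < b) (hc : 0 < c)
    (hlt : ∀ᶠ u in atTop, ginv (u * b) < c * ginv u) :
    ∀ᶠ u in atTop, g (c * ginv u) / u < b := by
  have hmul : Tendsto (· * b) atTop atTop := tendsto_id.atTop_mul_const hb
  filter_upwards [hlt, eventually_const_mul_ginv_mem_Ioo hδ hgc hL hginv hc,
    hmul.eventually (eventually_const_mul_ginv_mem_Ioo hδ hgc hL hginv one_pos),
    hmul.eventually (eventually_apply_ginv hδ hgc hL hginv), eventually_gt_atTop 0]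
    with u hlt hc_mem hb_mem hgb_eq hu
  rw [one_mul] at hb_mem
  rw [div_lt_iff₀ hu, mul_comm b, ← hgb_eq]
  exact hga hb_mem hc_mem hlt

theorem tendsto_apply_const_mul_ginv_div (hδ : 0 < δ) (hgc : ContinuousOn g (Ioo 0 δ))
    (hga : StrictAntiOn g (Ioo 0 δ)) (hL : Tendsto g (𝓝[>] 0) atTop)
    (hginv : ∀ t ∈ Ioo 0 δ, ginv (g t) = t) {β : ℝ} (hβ : 0 < β)
    (hlim : ∀ y : ℝ, 0 < y →
      Tendsto (fun s => ginv (s * y) / ginv s) atTop (𝓝 (y ^ (-β))))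
    {c : ℝ} (hc : 0 < c) :
    Tendsto (fun u => g (c * ginv u) / u) atTop (𝓝 (c ^ (-1 / β))) := by
  have hexp : -1 / β = (-β)⁻¹ := by rw [neg_div, one_div, neg_inv]
  have hβ' : -β < 0 := neg_lt_zero.2 hβ
  have hpos : ∀ᶠ u in atTop, 0 < ginv u :=
    (eventually_const_mul_ginv_mem_Ioo hδ hgc hL hginv one_pos).mono fun u hu => by
      simpa using hu.1
  refine tendsto_order.2 ⟨fun a ha => ?_, fun b hb => ?_⟩
  · -- only `a > 0` is informative, so compare with `a' = max a (c ^ (-1/β) / 2) > 0`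
    have hL0 : 0 < c ^ (-1 / β) := rpow_pos_of_pos hc _
    set a' := max a (c ^ (-1 / β) / 2)
    have ha' : 0 < a' := lt_max_of_lt_right (half_pos hL0)
    have hca' : c < a' ^ (-β) := by
      rw [← lt_rpow_inv_iff_of_neg ha' hc hβ', ← hexp]
      exact max_lt ha (half_lt_self hL0)
    have hlt : ∀ᶠ u in atTop, c * ginv u < ginv (u * a') := by
      filter_upwards [(hlim a' ha').eventually (eventually_gt_nhds hca'), hpos] with u hu hu0
      rwa [lt_div_iff₀ hu0] at hu
    filter_upwards [eventually_lt_apply_const_mul_ginv_div hδ hgc hga hL hginv ha' hc hlt]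
      with u hu
    exact (le_max_left _ _).trans_lt hu
  · have hb0 : 0 < b := (rpow_pos_of_pos hc _).trans hb
    have hbc : b ^ (-β) < c := by rwa [← rpow_inv_lt_iff_of_neg hc hb0 hβ', ← hexp]
    refine eventually_apply_const_mul_ginv_div_lt hδ hgc hga hL hginv hb0 hc ?_
    filter_upwards [(hlim b hb0).eventually (eventually_lt_nhds hbc), hpos] with u hu hu0
    rwa [div_lt_iff₀ hu0] at hu

end InverseFunction

/-- Type 2 computation in the AOT analysis: with
`g_{κ,u}(t) = Σ_{i=0}^{κ}(g(Mⁱt) − u)`, one has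
`g_{κ,u}(x·g⁻¹(u))/u → ((1 − M^{−(κ+1)/β})/(1 − M^{−1/β}))·x^{−1/β} − (κ+1)` as `u → ∞`. -/
theorem statement14 (δ : ℝ) (hδ : 0 < δ) (g ginv : ℝ → ℝ)
    (hgc : ContinuousOn g (Ioo 0 δ)) (hga : StrictAntiOn g (Ioo 0 δ))
    (hL : Tendsto g (nhdsWithin 0 (Ioi 0)) atTop)
    (hginv : ∀ t ∈ Ioo 0 δ, ginv (g t) = t)
    (β : ℝ) (hβ : 0 < β)
    (hlim : ∀ y : ℝ, 0 < y →
      Tendsto (fun s => ginv (s * y) / ginv s) atTop (nhds (y ^ (-β))))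
    (M : ℝ) (hM : 1 < M)
    (gk : ℕ → ℝ → ℝ → ℝ)
    (hgk : ∀ (κ : ℕ) (u t : ℝ), gk κ u t = ∑ i ∈ Finset.range (κ + 1), (g (M ^ i * t) - u)) :
    ∀ (κ : ℕ) (x : ℝ), 0 < x →
      Tendsto (fun u => gk κ u (x * ginv u) / u) atTop
        (nhds ((1 - M ^ (-((κ : ℝ) + 1) / β)) / (1 - M ^ (-1 / β)) * x ^ (-1 / β) -
          ((κ : ℝ) + 1))) := by
  intro κ x hx
  have hM0 : 0 < M := one_pos.trans hM
  have hterm : ∀ i ∈ Finset.range (κ + 1), Tendsto (fun u => g (M ^ i * (x * ginv u)) / u - 1)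
      atTop (𝓝 ((M ^ i * x) ^ (-1 / β) - 1)) := fun i _ => by
    simpa only [mul_assoc] using (tendsto_apply_const_mul_ginv_div hδ hgc hga hL hginv hβ hlim
      (mul_pos (pow_pos hM0 i) hx)).sub_const 1
  have hgeom : M ^ (-1 / β) ≠ 1 :=
    (rpow_lt_one_of_one_lt_of_neg hM (div_neg_of_neg_of_pos neg_one_lt_zero hβ)).ne
  have hexp : ((κ + 1 : ℕ) : ℝ) * (-1 / β) = -((κ : ℝ) + 1) / β := by push_cast; ring
  have hlimit : ∑ i ∈ Finset.range (κ + 1), ((M ^ i * x) ^ (-1 / β) - 1) =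
      (1 - M ^ (-((κ : ℝ) + 1) / β)) / (1 - M ^ (-1 / β)) * x ^ (-1 / β) - ((κ : ℝ) + 1) := by
    rw [Finset.sum_sub_distrib, sum_range_pow_mul_rpow hM0 hx.le hgeom, hexp]
    simp
  rw [← hlimit]
  refine (tendsto_finsetSum _ hterm).congr' ?_
  filter_upwards [eventually_ne_atTop 0] with u hu
  simp only [hgk, Finset.sum_div, sub_div, div_self hu]
end
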